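/- arXiv:1704.04927 — 7 statements merged into one kernel-verified Lean document; each statement's English description precedes it below -/
import Mathlib

section
/- Given any smooth function (α, κ) : I → ℝ² on an interval I = [0, c], there exists a Legendre curve (γ, η) : I → X × S in the smooth strictly convex normed plane X whose curvature pair is (α, κ), i.e., γ'(t) = α(t)ξ(t) and η'(t) = κ(t)ξ(t) where ξ(t) = b(η(t)). -/
open scoped Topology
open Set
open scoped ENNReal NNReal

variable {X : Type*}

/-- Birkhoff orthogonality: `x` is Birkhoff orthogonal to `y`. -/
def BirkhoffOrth [NormedAddCommGroup X] [NormedSpace ℝ X] (x y : X) : Prop :=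
  ∀ t : ℝ, ‖x‖ ≤ ‖x + t • y‖

lemma BirkhoffOrth.smul_right [NormedAddCommGroup X] [NormedSpace ℝ X] {x y : X}
    (h : BirkhoffOrth x y) (s : ℝ) : BirkhoffOrth x (s • y) := by
  intro t
  rw [smul_smul]
  exact h (t * s)

section Aux
variable [NormedAddCommGroup X] [NormedSpace ℝ X]

lemma aux_hasDerivAt_norm_comp
    (hnorm : ContDiffOn ℝ (⊤ : ℕ∞) (fun x : X => ‖x‖) {x : X | x ≠ 0})
    {g : ℝ → X} {t : ℝ} {g' : X} (hg : HasDerivAt g g' t) (hgt : g t ≠ 0) :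
    HasDerivAt (fun u => ‖g u‖) (fderiv ℝ (fun z : X => ‖z‖) (g t) g') t := by
  have hopen : IsOpen {x : X | x ≠ 0} := isOpen_ne
  have hd : DifferentiableAt ℝ (fun z : X => ‖z‖) (g t) :=
    ((hnorm.contDiffAt (hopen.mem_nhds hgt)).differentiableAt (by simp))
  exact hd.hasFDerivAt.comp_hasDerivAt t hg

lemma aux_birkhoff_char
    (hnorm : ContDiffOn ℝ (⊤ : ℕ∞) (fun x : X => ‖x‖) {x : X | x ≠ 0})
    {x : X} (hx : x ≠ 0) (y : X) :
    BirkhoffOrth x y ↔ fderiv ℝ (fun z : X => ‖z‖) x y = 0 := by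
  have hg : ∀ s : ℝ, HasDerivAt (fun t : ℝ => x + t • y) y s := by
    intro s
    simpa using (hasDerivAt_const s x).fun_add ((hasDerivAt_id s).smul_const y)
  have hf : HasDerivAt (fun t : ℝ => ‖x + t • y‖) (fderiv ℝ (fun z : X => ‖z‖) x y) 0 := by
    simpa using aux_hasDerivAt_norm_comp hnorm (hg 0) (by simpa using hx)
  constructor
  · intro hB
    have hmin : IsLocalMin (fun t : ℝ => ‖x + t • y‖) 0 := by
      apply Filter.Eventually.of_forall
      intro t; simpa using hB t
    have := hmin.deriv_eq_zero
    rwa [hf.deriv] at this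
  · intro h0
    intro t
    set f : ℝ → ℝ := fun t : ℝ => ‖x + t • y‖ with hfdef
    have hconv : ConvexOn ℝ univ f := by
      have : f = (fun z : X => ‖z‖) ∘ (AffineMap.lineMap x (x + y)) := by
        funext t
        show ‖x + t • y‖ = ‖(AffineMap.lineMap x (x+y)) t‖
        rw [AffineMap.lineMap_apply]
        congr 1
        simp [smul_sub]
        abel
      rw [this]
      simpa using (convexOn_univ_norm (E := X)).comp_affineMap (AffineMap.lineMap x (x + y))
    have hdf : DifferentiableAt ℝ f 0 := hf.differentiableAt
    have hderiv0 : deriv f 0 = 0 := by rw [hf.deriv, h0]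
    have hf0 : f 0 = ‖x‖ := by simp [f]
    rcases lt_trichotomy t 0 with ht | ht | ht
    · have := hconv.slope_le_deriv (mem_univ t) (mem_univ 0) ht hdf
      rw [hderiv0] at this
      have h2 : (f 0 - f t) / (0 - t) ≤ 0 := by simpa [slope_def_field] using this
      have hpos : (0:ℝ) < 0 - t := by linarith
      have h3 : f 0 - f t ≤ 0 := by
        have := (div_le_iff₀ hpos).mp h2
        linarith
      simpa [hf0] using (by linarith : f 0 ≤ f t)
    · simp [← hf0, ht]
    · have := hconv.deriv_le_slope (mem_univ 0) (mem_univ t) ht hdf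
      rw [hderiv0] at this
      have h2 : 0 ≤ (f t - f 0) / (t - 0) := by simpa [slope_def_field] using this
      have htpos : (0:ℝ) < t - 0 := by linarith
      have h3 : 0 ≤ f t - f 0 := by
        have := (le_div_iff₀ htpos).mp h2
        linarith
      simpa [hf0] using (by linarith : f 0 ≤ f t)

lemma aux_fderiv_norm_self
    (hnorm : ContDiffOn ℝ (⊤ : ℕ∞) (fun x : X => ‖x‖) {x : X | x ≠ 0})
    {x : X} (hx : x ≠ 0) :
    fderiv ℝ (fun z : X => ‖z‖) x x = ‖x‖ := by
  have hg : HasDerivAt (fun t : ℝ => x + t • x) x 0 := by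
    simpa using (hasDerivAt_const (0:ℝ) x).fun_add ((hasDerivAt_id (0:ℝ)).smul_const x)
  have hf : HasDerivAt (fun t : ℝ => ‖x + t • x‖) (fderiv ℝ (fun z : X => ‖z‖) x x) 0 :=
    by simpa using aux_hasDerivAt_norm_comp hnorm hg (by simpa using hx)
  have heq : (fun t : ℝ => ‖x + t • x‖) =ᶠ[𝓝 (0:ℝ)] fun t => (1 + t) * ‖x‖ := by
    have : Ioo (-1 : ℝ) 1 ∈ 𝓝 (0:ℝ) := Ioo_mem_nhds (by norm_num) (by norm_num)
    filter_upwards [this] with t ht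
    have h1 : (0:ℝ) ≤ 1 + t := by linarith [ht.1]
    have : x + t • x = (1 + t) • x := by rw [add_smul, one_smul]
    rw [this, norm_smul, Real.norm_eq_abs, abs_of_nonneg h1]
  have hf2 : HasDerivAt (fun t : ℝ => (1 + t) * ‖x‖) ‖x‖ 0 := by
    simpa using ((hasDerivAt_const (0:ℝ) (1:ℝ)).add (hasDerivAt_id (0:ℝ))).mul_const ‖x‖
  have := hf.congr_of_eventuallyEq heq.symm
  exact this.unique hf2
end Aux

section Aux2
variable [NormedAddCommGroup X] [NormedSpace ℝ X] [FiniteDimensional ℝ X]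

set_option maxHeartbeats 1000000 in
lemma aux_b_unique
    (hdim : Module.finrank ℝ X = 2)
    (hnorm : ContDiffOn ℝ (⊤ : ℕ∞) (fun x : X => ‖x‖) {x : X | x ≠ 0})
    (ω : X →ₗ[ℝ] X →ₗ[ℝ] ℝ)
    {x y₁ y₂ : X} (hx : x ≠ 0)
    (h1 : ‖y₁‖ = 1) (hB1 : BirkhoffOrth x y₁) (hω1 : 0 < ω x y₁)
    (h2 : ‖y₂‖ = 1) (hB2 : BirkhoffOrth x y₂) (hω2 : 0 < ω x y₂) :
    y₂ = y₁ := by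
  set φ : X →L[ℝ] ℝ := fderiv ℝ (fun z : X => ‖z‖) x with hφ
  have hk1 : φ y₁ = 0 := (aux_birkhoff_char hnorm hx y₁).mp hB1
  have hk2 : φ y₂ = 0 := (aux_birkhoff_char hnorm hx y₂).mp hB2
  have hφx : φ x = ‖x‖ := aux_fderiv_norm_self hnorm hx
  set L : X →ₗ[ℝ] ℝ := (φ : X →L[ℝ] ℝ).toLinearMap with hL
  have hLne : L ≠ 0 := by
    intro h
    have h0 : L x = 0 := by simp [h]
    have : ‖x‖ = 0 := by rw [← hφx]; exact h0
    exact hx (norm_eq_zero.mp this)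
  have hrange : Module.finrank ℝ (LinearMap.range L) = 1 := by
    have hne : LinearMap.range L ≠ ⊥ := fun h => hLne (LinearMap.range_eq_bot.mp h)
    have hnt : Nontrivial (LinearMap.range L) := Submodule.nontrivial_iff_ne_bot.mpr hne
    have hpos : 0 < Module.finrank ℝ (LinearMap.range L) := Module.finrank_pos_iff.mpr hnt
    have hle : Module.finrank ℝ (LinearMap.range L) ≤ 1 := by
      simpa [Module.finrank_self] using (LinearMap.range L).finrank_le
    omega
  have hker : Module.finrank ℝ (LinearMap.ker L) = 1 := by
    have := LinearMap.finrank_range_add_finrank_ker L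
    rw [hdim, hrange] at this
    omega
  have hy1ne : y₁ ≠ 0 := by
    intro h; rw [h] at h1; simp at h1
  have hspan : (ℝ ∙ y₁) = LinearMap.ker L := by
    apply Submodule.eq_of_le_of_finrank_eq
    · rw [Submodule.span_singleton_le_iff_mem]
      exact LinearMap.mem_ker.mpr hk1
    · rw [hker, finrank_span_singleton hy1ne]
  have hy2mem : y₂ ∈ (ℝ ∙ y₁) := by
    rw [hspan]; exact LinearMap.mem_ker.mpr hk2
  obtain ⟨cc, hcc⟩ := Submodule.mem_span_singleton.mp hy2mem
  have hcabs : |cc| = 1 := by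
    have := h2
    rw [← hcc, norm_smul, h1, Real.norm_eq_abs, mul_one] at this
    exact this
  have hcpos : 0 < cc := by
    have hω2' : 0 < cc * ω x y₁ := by
      have : ω x y₂ = cc * ω x y₁ := by rw [← hcc, map_smul]; rfl
      rwa [this] at hω2
    by_contra hcn; push_neg at hcn; nlinarith
  rw [← hcc, show cc = 1 from by rcases abs_cases cc with ⟨h,_⟩|⟨h,_⟩ <;> nlinarith, one_smul]
end Aux2

section Primitive
variable {E : Type*} [NormedAddCommGroup E] [NormedSpace ℝ E] [CompleteSpace E]

lemma hasDerivAt_primitive {f : ℝ → E} (hf : Continuous f) (t : ℝ) :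
    HasDerivAt (fun s => ∫ u in (0:ℝ)..s, f u) (f t) t :=
  intervalIntegral.integral_hasDerivAt_right (hf.intervalIntegrable _ _)
    (hf.stronglyMeasurableAtFilter _ _) hf.continuousAt

lemma contDiff_primitive {f : ℝ → E} (hf : ContDiff ℝ (⊤ : ℕ∞) f) :
    ContDiff ℝ (⊤ : ℕ∞) (fun s => ∫ u in (0:ℝ)..s, f u) := by
  rw [contDiff_infty_iff_deriv]
  refine ⟨fun x => (hasDerivAt_primitive hf.continuous x).differentiableAt, ?_⟩
  have hder : deriv (fun s => ∫ u in (0:ℝ)..s, f u) = f :=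
    funext fun x => (hasDerivAt_primitive hf.continuous x).deriv
  rw [hder]
  exact hf

end Primitive

theorem legendre_existence
    [NormedAddCommGroup X] [NormedSpace ℝ X] [FiniteDimensional ℝ X]
    [StrictConvexSpace ℝ X]
    (hdim : Module.finrank ℝ X = 2)
    (hnorm : ContDiffOn ℝ (⊤ : ℕ∞) (fun x : X => ‖x‖) {x : X | x ≠ 0})
    (ω : X →ₗ[ℝ] X →ₗ[ℝ] ℝ) (hωalt : ∀ x : X, ω x x = 0)
    (hωnd : ∀ x : X, x ≠ 0 → ∃ y : X, ω x y ≠ 0)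
    (b : X → X)
    (hb : ∀ v : X, v ≠ 0 → ‖b v‖ = 1 ∧ BirkhoffOrth v (b v) ∧ 0 < ω v (b v))
    (c : ℝ) (hc : 0 < c) (α κ : ℝ → ℝ)
    (hα : ContDiff ℝ (⊤ : ℕ∞) α) (hκ : ContDiff ℝ (⊤ : ℕ∞) κ) :
    ∃ γ η : ℝ → X, ContDiff ℝ (⊤ : ℕ∞) γ ∧ ContDiff ℝ (⊤ : ℕ∞) η ∧
      ∀ t ∈ Set.Icc (0:ℝ) c,
        ‖η t‖ = 1 ∧ BirkhoffOrth (η t) (deriv γ t) ∧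
        deriv γ t = α t • b (η t) ∧ deriv η t = κ t • b (η t) := by
  classical
  -- antisymmetry of ω
  have hanti : ∀ x y : X, ω y x = - ω x y := by
    intro x y
    have h := hωalt (x + y)
    simp only [map_add, LinearMap.add_apply] at h
    rw [hωalt x, hωalt y] at h
    linarith
  -- a pair of vectors spanning the plane with positive symplectic area
  obtain ⟨w₁, w₂, hne, hww⟩ :
      ∃ w₁ w₂ : X, (∀ a b' : ℝ, ¬(a = 0 ∧ b' = 0) → a • w₁ + b' • w₂ ≠ 0) ∧
        0 < ω w₁ w₂ := by
    obtain ⟨B⟩ : Nonempty (Module.Basis (Fin 2) ℝ X) := ⟨Module.finBasisOfFinrankEq ℝ X hdim⟩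
    have hind : ∀ a b' : ℝ, a • B 0 + b' • B 1 = 0 → a = 0 ∧ b' = 0 := by
      intro a b' h
      have h2 := Fintype.linearIndependent_iff.mp B.linearIndependent ![a, b'] ?_
      · exact ⟨h2 0, h2 1⟩
      · rw [Fin.sum_univ_two]
        simpa using h
    have hB0 : (B 0 : X) ≠ 0 := B.ne_zero 0
    have hne12 : ω (B 0) (B 1) ≠ 0 := by
      intro h0
      obtain ⟨y, hy⟩ := hωnd (B 0) hB0
      apply hy
      have hrep := B.sum_repr y
      rw [Fin.sum_univ_two] at hrep
      rw [← hrep]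
      simp only [map_add, map_smul, smul_eq_mul, hωalt, h0]
      ring
    rcases lt_or_gt_of_ne hne12 with hlt | hgt
    · refine ⟨B 1, B 0, ?_, ?_⟩
      · intro a b' hab h
        refine hab ?_
        rw [add_comm] at h
        obtain ⟨h1, h2⟩ := hind b' a h
        exact ⟨h2, h1⟩
      · rw [hanti]
        linarith
    · exact ⟨B 0, B 1, fun a b' hab h => hab (hind a b' h), hgt⟩
  -- the curve u on the sphere direction
  set u : ℝ → X := fun θ => Real.cos θ • w₁ + Real.sin θ • w₂ with hudef
  set v : ℝ → X := fun θ => -Real.sin θ • w₁ + Real.cos θ • w₂ with hvdef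
  have hu0 : ∀ θ, u θ ≠ 0 := by
    intro θ
    apply hne
    rintro ⟨h1, h2⟩
    have := Real.sin_sq_add_cos_sq θ
    rw [h1, h2] at this
    norm_num at this
  have hucd : ContDiff ℝ (⊤ : ℕ∞) u :=
    (Real.contDiff_cos.smul contDiff_const).add (Real.contDiff_sin.smul contDiff_const)
  have hu' : ∀ θ, HasDerivAt u (v θ) θ := by
    intro θ
    exact ((Real.hasDerivAt_cos θ).smul_const w₁).add ((Real.hasDerivAt_sin θ).smul_const w₂)
  have hωuv : ∀ θ, ω (u θ) (v θ) = ω w₁ w₂ := by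
    intro θ
    rw [hudef, hvdef]
    simp only [map_add, map_smul, LinearMap.add_apply, LinearMap.smul_apply, smul_eq_mul,
      map_neg, LinearMap.neg_apply, neg_smul]
    rw [hωalt w₁, hωalt w₂, hanti w₂ w₁]
    have := Real.sin_sq_add_cos_sq θ
    linear_combination (-(ω w₂) w₁) * this
  -- the unit-sphere parametrization p
  set N : ℝ → ℝ := fun θ => ‖u θ‖ with hNdef
  have hNpos : ∀ θ, 0 < N θ := fun θ => norm_pos_iff.mpr (hu0 θ)
  have hNne : ∀ θ, N θ ≠ 0 := fun θ => ne_of_gt (hNpos θ)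
  have hNcd : ContDiff ℝ (⊤ : ℕ∞) N := by
    rw [contDiff_iff_contDiffAt]
    intro θ
    exact (hnorm.contDiffAt (isOpen_ne.mem_nhds (hu0 θ))).comp θ hucd.contDiffAt
  set p : ℝ → X := fun θ => (N θ)⁻¹ • u θ with hpdef
  have hpcd : ContDiff ℝ (⊤ : ℕ∞) p := (hNcd.inv hNne).smul hucd
  have hpnorm : ∀ θ, ‖p θ‖ = 1 := by
    intro θ
    rw [hpdef]
    rw [norm_smul, Real.norm_eq_abs, abs_of_pos (inv_pos.mpr (hNpos θ))]
    exact inv_mul_cancel₀ (hNne θ)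
  have hpne : ∀ θ, p θ ≠ 0 := by
    intro θ h
    have := hpnorm θ
    rw [h] at this
    simp at this
  -- derivative of p
  have hNd : ∀ θ, HasDerivAt N (deriv N θ) θ :=
    fun θ => ((hNcd.differentiable (by simp)) θ).hasDerivAt
  have hpd : ∀ θ, HasDerivAt p ((N θ)⁻¹ • v θ + (-deriv N θ / N θ ^ 2) • u θ) θ := by
    intro θ
    exact ((hNd θ).inv (hNne θ)).smul (hu' θ)
  have hpderiv : ∀ θ, deriv p θ = (N θ)⁻¹ • v θ + (-deriv N θ / N θ ^ 2) • u θ :=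
    fun θ => (hpd θ).deriv
  have hωpP : ∀ θ, ω (p θ) (deriv p θ) = ((N θ)⁻¹)^2 * ω w₁ w₂ := by
    intro θ
    rw [hpderiv θ, hpdef]
    simp only [map_add, map_smul, LinearMap.add_apply, LinearMap.smul_apply, smul_eq_mul]
    rw [hωalt (u θ), hωuv θ]
    ring
  have hωpPpos : ∀ θ, 0 < ω (p θ) (deriv p θ) := by
    intro θ
    rw [hωpP θ]
    have := hNpos θ
    positivity
  have hPne : ∀ θ, deriv p θ ≠ 0 := by
    intro θ h
    have := hωpPpos θ
    rw [h] at this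
    simp at this
  -- Birkhoff orthogonality of p and its derivative
  have hfderiv0 : ∀ θ, fderiv ℝ (fun z : X => ‖z‖) (p θ) (deriv p θ) = 0 := by
    intro θ
    have h1 : HasDerivAt (fun θ' => ‖p θ'‖)
        (fderiv ℝ (fun z : X => ‖z‖) (p θ) (deriv p θ)) θ :=
      aux_hasDerivAt_norm_comp hnorm ((hpcd.differentiable (by simp) θ).hasDerivAt) (hpne θ)
    have h2 : (fun θ' => ‖p θ'‖) = fun _ => (1:ℝ) := funext hpnorm
    rw [h2] at h1
    exact h1.unique (hasDerivAt_const θ 1)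
  have hpB : ∀ θ, BirkhoffOrth (p θ) (deriv p θ) :=
    fun θ => (aux_birkhoff_char hnorm (hpne θ) _).mpr (hfderiv0 θ)
  -- identification of b along p
  set ξ : ℝ → X := fun θ => ‖deriv p θ‖⁻¹ • deriv p θ with hξdef
  have hξnorm : ∀ θ, ‖ξ θ‖ = 1 := by
    intro θ
    rw [hξdef]
    rw [norm_smul, Real.norm_eq_abs, abs_of_pos (inv_pos.mpr (norm_pos_iff.mpr (hPne θ)))]
    exact inv_mul_cancel₀ (ne_of_gt (norm_pos_iff.mpr (hPne θ)))
  have hξB : ∀ θ, BirkhoffOrth (p θ) (ξ θ) := fun θ => (hpB θ).smul_right _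
  have hξω : ∀ θ, 0 < ω (p θ) (ξ θ) := by
    intro θ
    rw [hξdef]
    rw [map_smul, smul_eq_mul]
    have h1 := hωpPpos θ
    have h2 : 0 < ‖deriv p θ‖⁻¹ := inv_pos.mpr (norm_pos_iff.mpr (hPne θ))
    positivity
  have hbp : ∀ θ, b (p θ) = ξ θ := by
    intro θ
    obtain ⟨hb1, hb2, hb3⟩ := hb (p θ) (hpne θ)
    exact aux_b_unique hdim hnorm ω (hpne θ) (hξnorm θ) (hξB θ) (hξω θ) hb1 hb2 hb3
  -- smoothness of the derivative and of ξ
  have hPcd : ContDiff ℝ (⊤ : ℕ∞) (fun θ => deriv p θ) := by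
    exact (contDiff_infty_iff_deriv.mp hpcd).2
  have hnPcd : ContDiff ℝ (⊤ : ℕ∞) (fun θ => ‖deriv p θ‖) := by
    rw [contDiff_iff_contDiffAt]
    intro θ
    exact (hnorm.contDiffAt (isOpen_ne.mem_nhds (hPne θ))).comp θ hPcd.contDiffAt
  have hnPne : ∀ θ, ‖deriv p θ‖ ≠ 0 := fun θ => ne_of_gt (norm_pos_iff.mpr (hPne θ))
  have hξcd : ContDiff ℝ (⊤ : ℕ∞) ξ := (hnPcd.inv hnPne).smul hPcd
  -- lower bound for ‖deriv p‖ via periodicity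
  have hpper : Function.Periodic p (2 * Real.pi) := by
    intro θ
    rw [hpdef, hNdef, hudef]
    simp [Real.cos_add_two_pi, Real.sin_add_two_pi]
  have hPper : Function.Periodic (fun θ => ‖deriv p θ‖) (2 * Real.pi) := by
    intro θ
    have h1 : HasDerivAt (fun x => p (x + 2 * Real.pi)) (deriv p (θ + 2 * Real.pi)) θ := by
      have := ((hpcd.differentiable (by simp)) (θ + 2 * Real.pi)).hasDerivAt
      exact HasDerivAt.comp_add_const θ (2 * Real.pi) this
    have h2 : (fun x => p (x + 2 * Real.pi)) = p := funext hpper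
    rw [h2] at h1
    show ‖deriv p (θ + 2 * Real.pi)‖ = ‖deriv p θ‖
    rw [h1.unique ((hpcd.differentiable (by simp) θ).hasDerivAt)]
  obtain ⟨m, hmpos, hm⟩ : ∃ m : ℝ, 0 < m ∧ ∀ θ, m ≤ ‖deriv p θ‖ := by
    have hcomp : IsCompact (Set.Icc (0:ℝ) (2 * Real.pi)) := isCompact_Icc
    have hne' : (Set.Icc (0:ℝ) (2 * Real.pi)).Nonempty :=
      ⟨0, by constructor <;> [rfl; positivity]⟩
    obtain ⟨θ₀, hθ₀mem, hθ₀⟩ := hcomp.exists_isMinOn hne' (hnPcd.continuous.continuousOn)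
    refine ⟨‖deriv p θ₀‖, norm_pos_iff.mpr (hPne θ₀), ?_⟩
    intro θ
    obtain ⟨y, hy, hyeq⟩ := hPper.exists_mem_Ico₀ (by positivity) θ
    rw [hyeq]
    exact hθ₀ ⟨hy.1, le_of_lt hy.2⟩
  -- arc length function and its inverse
  set sl : ℝ → ℝ := fun θ => ∫ x in (0:ℝ)..θ, ‖deriv p x‖ with hsldef
  have hsl' : ∀ θ, HasDerivAt sl ‖deriv p θ‖ θ := fun θ =>
    hasDerivAt_primitive hnPcd.continuous θ
  have hslcd : ContDiff ℝ (⊤ : ℕ∞) sl := contDiff_primitive hnPcd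
  have hslmono : StrictMono sl := by
    apply strictMono_of_deriv_pos
    intro θ
    rw [(hsl' θ).deriv]
    exact norm_pos_iff.mpr (hPne θ)
  have hslsurj : Function.Surjective sl := by
    have hub : ∀ θ : ℝ, 0 ≤ θ → m * θ ≤ sl θ := by
      intro θ hθ
      rw [hsldef]
      calc m * θ = ∫ _ in (0:ℝ)..θ, m := by
            rw [intervalIntegral.integral_const, smul_eq_mul, sub_zero, mul_comm]
        _ ≤ ∫ x in (0:ℝ)..θ, ‖deriv p x‖ := by
            apply intervalIntegral.integral_mono_on hθ (intervalIntegrable_const)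
              (hnPcd.continuous.intervalIntegrable _ _)
            intro x _
            exact hm x
    have hlb : ∀ θ : ℝ, θ ≤ 0 → sl θ ≤ m * θ := by
      intro θ hθ
      have h1 : sl θ = - ∫ x in θ..(0:ℝ), ‖deriv p x‖ := by
        show (∫ x in (0:ℝ)..θ, ‖deriv p x‖) = - ∫ x in θ..(0:ℝ), ‖deriv p x‖
        exact intervalIntegral.integral_symm θ 0
      have h2 : m * (-θ) ≤ ∫ x in θ..(0:ℝ), ‖deriv p x‖ := by
        calc m * (-θ) = ∫ _ in θ..(0:ℝ), m := by
              rw [intervalIntegral.integral_const, smul_eq_mul, zero_sub, mul_comm]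
          _ ≤ ∫ x in θ..(0:ℝ), ‖deriv p x‖ := by
              apply intervalIntegral.integral_mono_on hθ (intervalIntegrable_const)
                (hnPcd.continuous.intervalIntegrable _ _)
              intro x _
              exact hm x
      rw [h1]
      linarith
    apply Continuous.surjective hslcd.continuous
    · refine Filter.tendsto_atTop_mono' Filter.atTop ?_
        ((Filter.tendsto_id (α := ℝ)).const_mul_atTop hmpos)
      filter_upwards [Filter.eventually_ge_atTop (0:ℝ)] with θ hθ
      exact hub θ hθ
    · refine Filter.tendsto_atBot_mono' Filter.atBot ?_
        ((Filter.tendsto_id (α := ℝ)).const_mul_atBot hmpos)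
      filter_upwards [Filter.eventually_le_atBot (0:ℝ)] with θ hθ
      exact hlb θ hθ
  set eqv : ℝ ≃o ℝ := StrictMono.orderIsoOfSurjective sl hslmono hslsurj with heqv
  set g : ℝ → ℝ := fun y => eqv.symm y with hgdef
  have hgs : ∀ θ, g (sl θ) = θ := by
    intro θ
    rw [hgdef]
    exact eqv.symm_apply_apply θ
  have hsg : ∀ y, sl (g y) = y := by
    intro y
    rw [hgdef]
    exact eqv.apply_symm_apply y
  have hgcd : ContDiff ℝ (⊤ : ℕ∞) g := by
    have := (eqv.toHomeomorph).contDiff_symm_deriv (f' := fun θ => ‖deriv p θ‖)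
      hnPne (fun θ => hsl' θ) hslcd
    exact this
  have hgd : ∀ y, HasDerivAt g (‖deriv p (g y)‖⁻¹) y := by
    intro y
    have hdg : HasDerivAt g (deriv g y) y := ((hgcd.differentiable (by simp)) y).hasDerivAt
    have hcomp : HasDerivAt (fun y' => sl (g y')) (‖deriv p (g y)‖ * deriv g y) y :=
      (hsl' (g y)).comp y hdg
    have hid : (fun y' => sl (g y')) = id := funext hsg
    rw [hid] at hcomp
    have h1 : ‖deriv p (g y)‖ * deriv g y = 1 := hcomp.unique (hasDerivAt_id y)
    have hne0 : ‖deriv p (g y)‖ ≠ 0 := hnPne (g y)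
    have h2 : deriv g y = ‖deriv p (g y)‖⁻¹ := by
      field_simp
      linear_combination h1
    rwa [h2] at hdg
  -- the angle function
  set K : ℝ → ℝ := fun t => ∫ x in (0:ℝ)..t, κ x with hKdef
  have hK' : ∀ t, HasDerivAt K (κ t) t := fun t => hasDerivAt_primitive hκ.continuous t
  have hKcd : ContDiff ℝ (⊤ : ℕ∞) K := contDiff_primitive hκ
  set θf : ℝ → ℝ := fun t => g (K t) with hθfdef
  have hθfcd : ContDiff ℝ (⊤ : ℕ∞) θf := hgcd.comp hKcd
  have hθf' : ∀ t, HasDerivAt θf (‖deriv p (θf t)‖⁻¹ * κ t) t := by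
    intro t
    exact (hgd (K t)).comp t (hK' t)
  -- the curves
  set η : ℝ → X := fun t => p (θf t) with hηdef
  have hηcd : ContDiff ℝ (⊤ : ℕ∞) η := hpcd.comp hθfcd
  have hη' : ∀ t, HasDerivAt η (κ t • ξ (θf t)) t := by
    intro t
    have h1 : HasDerivAt η ((‖deriv p (θf t)‖⁻¹ * κ t) • deriv p (θf t)) t :=
      HasDerivAt.scomp t ((hpcd.differentiable (by simp)) (θf t)).hasDerivAt (hθf' t)
    convert h1 using 1
    rw [hξdef, smul_smul, mul_comm]
  set w : ℝ → X := fun t => α t • ξ (θf t) with hwdef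
  have hwcd : ContDiff ℝ (⊤ : ℕ∞) w := hα.smul (hξcd.comp hθfcd)
  set γ : ℝ → X := fun t => ∫ x in (0:ℝ)..t, w x with hγdef
  have hγ' : ∀ t, HasDerivAt γ (w t) t := fun t => hasDerivAt_primitive hwcd.continuous t
  have hγcd : ContDiff ℝ (⊤ : ℕ∞) γ := contDiff_primitive hwcd
  refine ⟨γ, η, hγcd, hηcd, ?_⟩
  intro t _
  have hbη : b (η t) = ξ (θf t) := hbp (θf t)
  refine ⟨hpnorm (θf t), ?_, ?_, ?_⟩
  · rw [(hγ' t).deriv, hwdef]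
    have := (hξB (θf t)).smul_right (α t)
    exact this
  · rw [(hγ' t).deriv, hbη]
  · rw [(hη' t).deriv, hbη]
end

section
/- Let γ : S¹ → X be a closed front all of whose singular points are ordinary cusps. Then γ has an even number of ordinary cusps. -/
open scoped Topology
open Set

variable {X : Type*}

section Aux

lemma aux_sign_pos {f : ℝ → ℝ} (hf : ContDiff ℝ (⊤ : ℕ∞) f) {a : ℝ} (ha : f a = 0)
    (h' : 0 < deriv f a) :
    ∃ ε > 0, (∀ s ∈ Set.Ioo (a - ε) a, f s < 0) ∧ (∀ s ∈ Set.Ioo a (a + ε), 0 < f s) := by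
  have hc : Continuous (deriv f) := hf.continuous_deriv (by simp)
  have hmem : {x | 0 < deriv f x} ∈ 𝓝 a := (isOpen_lt continuous_const hc).mem_nhds h'
  obtain ⟨ε, hε, hball⟩ := Metric.mem_nhds_iff.mp hmem
  have hsub : Set.Ioo (a - ε) (a + ε) ⊆ {x | 0 < deriv f x} := by
    rwa [← Real.ball_eq_Ioo]
  have hmono : StrictMonoOn f (Set.Ioo (a - ε) (a + ε)) := by
    apply strictMonoOn_of_deriv_pos (convex_Ioo _ _) hf.continuous.continuousOn
    intro x hx
    exact hsub (by rwa [interior_Ioo] at hx)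
  have hamem : a ∈ Set.Ioo (a - ε) (a + ε) := by constructor <;> linarith
  refine ⟨ε, hε, ?_, ?_⟩
  · intro s hs
    have : f s < f a := hmono ⟨hs.1, by linarith [hs.2]⟩ hamem hs.2
    linarith [this, ha.ge]
  · intro s hs
    have : f a < f s := hmono hamem ⟨by linarith [hs.1], hs.2⟩ hs.1
    rw [ha] at this; exact this

lemma aux_sign_neg {f : ℝ → ℝ} (hf : ContDiff ℝ (⊤ : ℕ∞) f) {a : ℝ} (ha : f a = 0)
    (h' : deriv f a < 0) :
    ∃ ε > 0, (∀ s ∈ Set.Ioo (a - ε) a, 0 < f s) ∧ (∀ s ∈ Set.Ioo a (a + ε), f s < 0) := by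
  have h'' : 0 < deriv (fun x => -f x) a := by rw [deriv.fun_neg]; linarith
  obtain ⟨ε, hε, h1, h2⟩ := aux_sign_pos hf.neg (by simp [ha]) h''
  exact ⟨ε, hε, fun s hs => by linarith [h1 s hs], fun s hs => by linarith [h2 s hs]⟩

lemma aux_isolated {f : ℝ → ℝ} (hf : ContDiff ℝ (⊤ : ℕ∞) f) {a : ℝ} (ha : f a = 0)
    (h' : deriv f a ≠ 0) :
    ∃ ε > 0, ∀ s ∈ Set.Ioo (a - ε) (a + ε), s ≠ a → f s ≠ 0 := by
  rcases h'.lt_or_gt with h | h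
  · obtain ⟨ε, hε, h1, h2⟩ := aux_sign_neg hf ha h
    refine ⟨ε, hε, fun s hs hne => ?_⟩
    rcases hne.lt_or_gt with hlt | hlt
    · exact (h1 s ⟨hs.1, hlt⟩).ne'
    · exact (h2 s ⟨hlt, hs.2⟩).ne
  · obtain ⟨ε, hε, h1, h2⟩ := aux_sign_pos hf ha h
    refine ⟨ε, hε, fun s hs hne => ?_⟩
    rcases hne.lt_or_gt with hlt | hlt
    · exact (h1 s ⟨hs.1, hlt⟩).ne
    · exact (h2 s ⟨hlt, hs.2⟩).ne'

lemma aux_right {f : ℝ → ℝ} (hf : ContDiff ℝ (⊤ : ℕ∞) f) {a m : ℝ} (ha : f a = 0)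
    (h' : deriv f a ≠ 0) (hm : a < m) :
    ∃ c ∈ Set.Ioo a m, (0 < f c ↔ 0 < deriv f a) := by
  rcases h'.lt_or_gt with h | h
  · obtain ⟨ε, hε, _, h2⟩ := aux_sign_neg hf ha h
    refine ⟨a + min (ε/2) ((m-a)/2), ⟨by simp [hε, hm], by
      have := min_le_right (ε/2) ((m-a)/2); linarith⟩, ?_⟩
    have hc : f (a + min (ε/2) ((m-a)/2)) < 0 := h2 _ ⟨by simp [hε, hm],
      by have := min_le_left (ε/2) ((m-a)/2); linarith⟩
    constructor
    · intro hx; linarith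
    · intro hx; linarith
  · obtain ⟨ε, hε, _, h2⟩ := aux_sign_pos hf ha h
    refine ⟨a + min (ε/2) ((m-a)/2), ⟨by simp [hε, hm], by
      have := min_le_right (ε/2) ((m-a)/2); linarith⟩, ?_⟩
    have hc : 0 < f (a + min (ε/2) ((m-a)/2)) := h2 _ ⟨by simp [hε, hm],
      by have := min_le_left (ε/2) ((m-a)/2); linarith⟩
    constructor
    · intro _; exact h
    · intro _; exact hc

lemma aux_left {f : ℝ → ℝ} (hf : ContDiff ℝ (⊤ : ℕ∞) f) {b m : ℝ} (hb : f b = 0)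
    (h' : deriv f b ≠ 0) (hm : m < b) :
    ∃ d ∈ Set.Ioo m b, (0 < f d ↔ deriv f b < 0) := by
  rcases h'.lt_or_gt with h | h
  · obtain ⟨ε, hε, h1, _⟩ := aux_sign_neg hf hb h
    refine ⟨b - min (ε/2) ((b-m)/2), ⟨by
      have := min_le_right (ε/2) ((b-m)/2); linarith, by simp [hε, hm]⟩, ?_⟩
    have hc : 0 < f (b - min (ε/2) ((b-m)/2)) := h1 _ ⟨by
      have := min_le_left (ε/2) ((b-m)/2); linarith, by simp [hε, hm]⟩
    constructor
    · intro _; exact h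
    · intro _; exact hc
  · obtain ⟨ε, hε, h1, _⟩ := aux_sign_pos hf hb h
    refine ⟨b - min (ε/2) ((b-m)/2), ⟨by
      have := min_le_right (ε/2) ((b-m)/2); linarith, by simp [hε, hm]⟩, ?_⟩
    have hc : f (b - min (ε/2) ((b-m)/2)) < 0 := h1 _ ⟨by
      have := min_le_left (ε/2) ((b-m)/2); linarith, by simp [hε, hm]⟩
    constructor
    · intro hx; linarith
    · intro hx; linarith

lemma aux_between {f : ℝ → ℝ} (hf : ContDiff ℝ (⊤ : ℕ∞) f) {a b : ℝ} (hab : a < b)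
    (ha : f a = 0) (hb : f b = 0) (h'a : deriv f a ≠ 0) (h'b : deriv f b ≠ 0)
    (hno : ∀ s ∈ Set.Ioo a b, f s ≠ 0) :
    (0 < deriv f a ↔ deriv f b < 0) := by
  set m := (a + b) / 2 with hm
  obtain ⟨c, hc, hciff⟩ := aux_right hf ha h'a (show a < m by rw [hm]; linarith)
  obtain ⟨d, hd, hdiff⟩ := aux_left hf hb h'b (show m < b by rw [hm]; linarith)
  have hcab : c ∈ Set.Ioo a b := ⟨hc.1, by linarith [hc.2, hd.2]⟩
  have hdab : d ∈ Set.Ioo a b := ⟨by linarith [hd.1, hc.1], hd.2⟩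
  have hcd : c < d := lt_trans hc.2 hd.1
  have hsame : (0 < f c ↔ 0 < f d) := by
    by_contra hcon
    have hcne := hno c hcab
    have hdne := hno d hdab
    rcases hcne.lt_or_gt with hc0 | hc0 <;> rcases hdne.lt_or_gt with hd0 | hd0
    · exact hcon (by constructor <;> intro h <;> linarith)
    · -- f c < 0 < f d : IVT
      have : (0:ℝ) ∈ Set.Ioo (f c) (f d) := ⟨hc0, hd0⟩
      obtain ⟨z, hz, hz0⟩ := intermediate_value_Ioo hcd.le
        (hf.continuous.continuousOn) this
      exact hno z ⟨lt_trans hcab.1 hz.1, lt_trans hz.2 hdab.2⟩ hz0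
    · -- f d < 0 < f c
      have : (0:ℝ) ∈ Set.Ioo (f d) (f c) := ⟨hd0, hc0⟩
      obtain ⟨z, hz, hz0⟩ := intermediate_value_Ioo' hcd.le
        (hf.continuous.continuousOn) this
      exact hno z ⟨lt_trans hcab.1 hz.1, lt_trans hz.2 hdab.2⟩ hz0
    · exact hcon (by constructor <;> intro h <;> linarith)
  rw [← hciff, hsame, hdiff]

lemma aux_finite {f : ℝ → ℝ} (hf : ContDiff ℝ (⊤ : ℕ∞) f)
    (htr : ∀ t, f t = 0 → deriv f t ≠ 0) :
    {t ∈ Set.Ico (0:ℝ) 1 | f t = 0}.Finite := by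
  have hK : IsCompact (Set.Icc (0:ℝ) 1 ∩ f ⁻¹' {0}) :=
    isCompact_Icc.inter_right (isClosed_singleton.preimage hf.continuous)
  have hdisc : DiscreteTopology ↥(Set.Icc (0:ℝ) 1 ∩ f ⁻¹' {0}) := by
    rw [discreteTopology_subtype_iff]
    intro x hx
    obtain ⟨ε, hε, hiso⟩ := aux_isolated hf (by exact hx.2) (htr x hx.2)
    rw [Filter.inf_principal_eq_bot]
    have : Set.Ioo (x - ε) (x + ε) ∈ 𝓝 x := Ioo_mem_nhds (by linarith) (by linarith)
    filter_upwards [nhdsWithin_le_nhds this, self_mem_nhdsWithin] with s hs hne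
    intro hsmem
    exact hiso s hs hne hsmem.2
  have := hK.finite (isDiscrete_iff_discreteTopology.mpr hdisc)
  apply this.subset
  rintro t ⟨ht, hft⟩
  exact ⟨⟨ht.1, ht.2.le⟩, hft⟩

lemma aux_even {f : ℝ → ℝ} (hf : ContDiff ℝ (⊤ : ℕ∞) f) (hper : ∀ t, f (t + 1) = f t)
    (htr : ∀ t, f t = 0 → deriv f t ≠ 0)
    (hfin : {t ∈ Set.Ico (0:ℝ) 1 | f t = 0}.Finite) :
    Even {t ∈ Set.Ico (0:ℝ) 1 | f t = 0}.ncard := by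
  classical
  have hperd : ∀ t, deriv f (t + 1) = deriv f t := by
    intro t
    have h1 : (fun s => f (s + 1)) = f := funext hper
    have h2 := deriv_comp_add_const f 1 t
    rw [h1] at h2
    exact h2.symm
  set F : Finset ℝ := hfin.toFinset with hF
  have hmemF : ∀ x, x ∈ F ↔ (x ∈ Set.Ico (0:ℝ) 1 ∧ f x = 0) := by
    intro x; rw [hF, Set.Finite.mem_toFinset]; exact Iff.rfl
  have hncard : {t ∈ Set.Ico (0:ℝ) 1 | f t = 0}.ncard = F.card := by
    rw [Set.ncard_eq_toFinset_card _ hfin]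
  rw [hncard]
  set l : List ℝ := F.sort (· ≤ ·) with hl
  have hlen : l.length = F.card := Finset.length_sort _
  rw [← hlen]
  have hsorted : l.SortedLT := Finset.sortedLT_sort F
  have hmem : ∀ x, x ∈ l ↔ (x ∈ Set.Ico (0:ℝ) 1 ∧ f x = 0) := by
    intro x; rw [hl, Finset.mem_sort]; exact hmemF x
  have hgetmem : ∀ (i : Fin l.length), l.get i ∈ Set.Ico (0:ℝ) 1 ∧ f (l.get i) = 0 :=
    fun i => (hmem _).mp (l.get_mem i)
  rcases Nat.eq_zero_or_pos l.length with hn | hn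
  · rw [hn]; exact Even.zero
  -- no zeros strictly between consecutive entries
  have hstrict : StrictMono l.get := List.SortedLT.strictMono_get hsorted
  have hnozero : ∀ (i j : Fin l.length), i.1 + 1 = j.1 →
      ∀ s ∈ Set.Ioo (l.get i) (l.get j), f s ≠ 0 := by
    intro i j hij s hs hfs
    have hs0 : s ∈ Set.Ico (0:ℝ) 1 := by
      constructor
      · linarith [(hgetmem i).1.1, hs.1]
      · linarith [(hgetmem j).1.2, hs.2]
    have : s ∈ l := (hmem s).mpr ⟨hs0, hfs⟩
    obtain ⟨k, hk⟩ := List.mem_iff_get.mp this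
    have h1 : i < k := by
      rw [← hstrict.lt_iff_lt]; rw [hk]; exact hs.1
    have h2 : k < j := by
      rw [← hstrict.lt_iff_lt]; rw [hk]; exact hs.2
    omega
  -- alternation of sign of deriv f along consecutive zeros
  have halt : ∀ (i j : Fin l.length), i.1 + 1 = j.1 →
      (0 < deriv f (l.get i) ↔ ¬ (0 < deriv f (l.get j))) := by
    intro i j hij
    have hlt : l.get i < l.get j := hstrict (by omega)
    have h := aux_between hf hlt (hgetmem i).2 (hgetmem j).2
      (htr _ (hgetmem i).2) (htr _ (hgetmem j).2) (hnozero i j hij)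
    rw [h]
    constructor
    · intro h1 h2; linarith
    · intro h1
      rcases (htr _ (hgetmem j).2).lt_or_gt with h2 | h2
      · exact h2
      · exact absurd h2 h1
  -- wrap around
  have h0 : (0 : ℕ) < l.length := hn
  set i0 : Fin l.length := ⟨0, h0⟩ with hi0
  set iN : Fin l.length := ⟨l.length - 1, by omega⟩ with hiN
  have hwrapno : ∀ s ∈ Set.Ioo (l.get iN) (l.get i0 + 1), f s ≠ 0 := by
    intro s hs hfs
    rcases lt_or_ge s 1 with h1 | h1
    · have hs0 : s ∈ Set.Ico (0:ℝ) 1 := ⟨by linarith [(hgetmem iN).1.1, hs.1], h1⟩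
      have : s ∈ l := (hmem s).mpr ⟨hs0, hfs⟩
      obtain ⟨k, hk⟩ := List.mem_iff_get.mp this
      have : l.get k ≤ l.get iN := by
        apply hstrict.monotone
        rw [Fin.le_def]; simp [hiN]; omega
      rw [hk] at this
      linarith [hs.1]
    · have hf1 : f (s - 1) = 0 := by
        have := hper (s - 1); rw [sub_add_cancel] at this; rw [← this]; exact hfs
      have hs0 : s - 1 ∈ Set.Ico (0:ℝ) 1 := by
        constructor
        · linarith
        · have := (hgetmem i0).1.2; linarith [hs.2]
      have : s - 1 ∈ l := (hmem _).mpr ⟨hs0, hf1⟩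
      obtain ⟨k, hk⟩ := List.mem_iff_get.mp this
      have : l.get i0 ≤ l.get k := by
        apply hstrict.monotone
        simp [Fin.le_def, hi0]
      rw [hk] at this
      linarith [hs.2]
  have hNlt0 : l.get iN < l.get i0 + 1 := by
    have := (hgetmem iN).1.2
    have := (hgetmem i0).1.1
    linarith
  have hf01 : f (l.get i0 + 1) = 0 := by rw [hper]; exact (hgetmem i0).2
  have hwrap : (0 < deriv f (l.get iN) ↔ ¬ (0 < deriv f (l.get i0))) := by
    have h := aux_between hf hNlt0 (hgetmem iN).2 hf01
      (htr _ (hgetmem iN).2) (by rw [hperd]; exact htr _ (hgetmem i0).2) hwrapno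
    rw [hperd] at h
    rw [h]
    constructor
    · intro h1 h2; linarith
    · intro h1
      rcases (htr _ (hgetmem i0).2).lt_or_gt with h2 | h2
      · exact h2
      · exact absurd h2 h1
  -- induction: sign at index i
  have hind : ∀ (i : Fin l.length),
      (0 < deriv f (l.get i) ↔ ((0 < deriv f (l.get i0)) ↔ Even i.1)) := by
    intro ⟨i, hi⟩
    induction i with
    | zero => simp [hi0]
    | succ k ih =>
      have hk : k < l.length := by omega
      have hprev := ih hk
      have hstep := halt ⟨k, hk⟩ ⟨k+1, by omega⟩ rfl
      rw [hstep] at hprev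
      simp only [Nat.even_add_one]
      tauto
  have hlast := hind iN
  rw [hwrap] at hlast
  have : ¬ Even (l.length - 1) := by tauto
  have : Odd (l.length - 1) := Nat.odd_iff.mpr (Nat.not_even_iff.mp this)
  obtain ⟨m, hm⟩ := this
  exact ⟨m + 1, by omega⟩

end Aux

theorem closed_front_even_number_of_cusps
    [NormedAddCommGroup X] [NormedSpace ℝ X] [FiniteDimensional ℝ X]
    [StrictConvexSpace ℝ X]
    (hdim : Module.finrank ℝ X = 2)
    (hnorm : ContDiffOn ℝ (⊤ : ℕ∞) (fun x : X => ‖x‖) {x : X | x ≠ 0})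
    (ω : X →ₗ[ℝ] X →ₗ[ℝ] ℝ) (hωalt : ∀ x : X, ω x x = 0)
    (hωnd : ∀ x : X, x ≠ 0 → ∃ y : X, ω x y ≠ 0)
    (b : X → X)
    (hb : ∀ v : X, v ≠ 0 → ‖b v‖ = 1 ∧ BirkhoffOrth v (b v) ∧ 0 < ω v (b v))
    (γ η : ℝ → X) (α κ : ℝ → ℝ)
    (hγ : ContDiff ℝ (⊤ : ℕ∞) γ) (hη : ContDiff ℝ (⊤ : ℕ∞) η)
    (hαs : ContDiff ℝ (⊤ : ℕ∞) α) (hκs : ContDiff ℝ (⊤ : ℕ∞) κ)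
    (hunit : ∀ t : ℝ, ‖η t‖ = 1)
    (hB : ∀ t : ℝ, BirkhoffOrth (η t) (deriv γ t))
    (hα : ∀ t : ℝ, deriv γ t = α t • b (η t))
    (hκ : ∀ t : ℝ, deriv η t = κ t • b (η t))
    (himm : ∀ t : ℝ, deriv γ t ≠ 0 ∨ deriv η t ≠ 0)
    (hγper : ∀ t : ℝ, γ (t + 1) = γ t) (hηper : ∀ t : ℝ, η (t + 1) = η t)
    (hcusp : ∀ t : ℝ, deriv γ t = 0 →
      LinearIndependent ℝ ![iteratedDeriv 2 γ t, iteratedDeriv 3 γ t]) :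
    {t ∈ Set.Ico (0:ℝ) 1 | deriv γ t = 0}.Finite ∧
      Even {t ∈ Set.Ico (0:ℝ) 1 | deriv γ t = 0}.ncard := by
  have hηne : ∀ t, η t ≠ 0 := by
    intro t h
    have := hunit t
    rw [h, norm_zero] at this
    norm_num at this
  have hbne : ∀ t, b (η t) ≠ 0 := by
    intro t h
    have := (hb (η t) (hηne t)).1
    rw [h, norm_zero] at this
    norm_num at this
  have hiff : ∀ t, (deriv γ t = 0 ↔ α t = 0) := by
    intro t
    rw [hα t, smul_eq_zero]
    exact ⟨fun h => h.resolve_right (hbne t), Or.inl⟩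
  have hαper : ∀ t, α (t + 1) = α t := by
    intro t
    have hd : deriv γ (t + 1) = deriv γ t := by
      have h1 : (fun s => γ (s + 1)) = γ := funext hγper
      have h2 := deriv_comp_add_const γ 1 t
      rw [h1] at h2
      exact h2.symm
    have := hα (t + 1)
    rw [hd, hα t, hηper t] at this
    have h3 : (α (t+1) - α t) • b (η t) = 0 := by
      rw [sub_smul, ← this, sub_self]
    rcases smul_eq_zero.mp h3 with h | h
    · linarith [sub_eq_zero.mp h]
    · exact absurd h (hbne t)
  have htr : ∀ t, α t = 0 → deriv α t ≠ 0 := by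
    intro t ht
    have hγ't : deriv γ t = 0 := (hiff t).mpr ht
    have hη't : deriv η t ≠ 0 := (himm t).resolve_left (by simp [hγ't])
    have hκt : κ t ≠ 0 := by
      intro h; apply hη't; rw [hκ t, h, zero_smul]
    have hev : deriv γ =ᶠ[𝓝 t] fun s => ((κ s)⁻¹ * α s) • deriv η s := by
      have hU : {s : ℝ | κ s ≠ 0} ∈ 𝓝 t :=
        (isOpen_compl_singleton.preimage hκs.continuous).mem_nhds hκt
      filter_upwards [hU] with s hs
      rw [hα s, hκ s, smul_smul]
      congr 1
      field_simp
    have hηd : ContDiff ℝ ((⊤:ℕ∞) : WithTop ℕ∞) (deriv η) := (contDiff_infty_iff_deriv.mp (hη.of_le (by simp))).2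
    have hβ : HasDerivAt (fun s => (κ s)⁻¹ * α s) ((κ t)⁻¹ * deriv α t) t := by
      have h1 : HasDerivAt (fun s => (κ s)⁻¹) (-(deriv κ t) / (κ t)^2) t := by
        have := ((hκs.differentiable (by simp) t).hasDerivAt).inv hκt
        exact this
      have h2 : HasDerivAt α (deriv α t) t := (hαs.differentiable (by simp) t).hasDerivAt
      have := h1.mul h2
      refine this.congr_deriv ?_
      rw [ht]
      ring
    have hg : HasDerivAt (fun s => ((κ s)⁻¹ * α s) • deriv η s)
        (((κ t)⁻¹ * deriv α t) • deriv η t) t := by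
      have h2 : HasDerivAt (deriv η) (deriv (deriv η) t) t :=
        (hηd.differentiable (by simp) t).hasDerivAt
      have := hβ.smul h2
      convert this using 1
      · rfl
      · rw [ht]
        simp
    have h2γ : iteratedDeriv 2 γ t = ((κ t)⁻¹ * deriv α t) • deriv η t := by
      have : iteratedDeriv 2 γ t = deriv (deriv γ) t := by
        rw [iteratedDeriv_succ, iteratedDeriv_one]
      rw [this, hev.deriv_eq]
      exact hg.deriv
    have hne : iteratedDeriv 2 γ t ≠ 0 := by
      have hli := hcusp t hγ't
      have := hli.ne_zero 0
      simpa using this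
    intro habs
    apply hne
    rw [h2γ, habs]
    simp
  have hsets : {t ∈ Set.Ico (0:ℝ) 1 | deriv γ t = 0} = {t ∈ Set.Ico (0:ℝ) 1 | α t = 0} := by
    ext t
    simp only [Set.mem_setOf_eq, Set.mem_sep_iff]
    exact and_congr_right fun _ => hiff t
  rw [hsets]
  have hfin := aux_finite hαs htr
  exact ⟨hfin, aux_even hαs hαper htr hfin⟩
end

section
/- Let (γ, η) be a Legendre immersion with curvature pair (α, κ), and let t₀ be an ordinary cusp. Then [η(t₀), η'(t₀)] ≠ 0, and: if [η(t₀), η'(t₀)] > 0 (a zig), then for every sufficiently small ε > 0 and all t₁ < t₀ < t₂ in (t₀−ε, t₀+ε) one has [γ'(t₁), γ'(t₂)] < 0; if [η(t₀), η'(t₀)] < 0 (a zag), then [γ'(t₁), γ'(t₂)] > 0 for such t₁, t₂. -/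
set_option maxHeartbeats 2000000


open scoped Topology
open Set

variable {X : Type*}

section Aux

variable [NormedAddCommGroup X] [NormedSpace ℝ X] [FiniteDimensional ℝ X]

lemma aux_skew (ω : X →ₗ[ℝ] X →ₗ[ℝ] ℝ) (hωalt : ∀ x : X, ω x x = 0) (x y : X) :
    ω x y = - ω y x := by
  have h := hωalt (x + y)
  simp only [map_add, LinearMap.add_apply, hωalt] at h
  linarith

lemma aux_ne (hdim : Module.finrank ℝ X = 2) (ω : X →ₗ[ℝ] X →ₗ[ℝ] ℝ)
    (hωalt : ∀ x : X, ω x x = 0) (hωnd : ∀ x : X, x ≠ 0 → ∃ y : X, ω x y ≠ 0)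
    {x y : X} (h : LinearIndependent ℝ ![x, y]) : ω x y ≠ 0 := by
  intro h0
  have hx : x ≠ 0 := by
    have := h.ne_zero 0
    simpa using this
  obtain ⟨z, hz⟩ := hωnd x hx
  have hcard : Fintype.card (Fin 2) = Module.finrank ℝ X := by simp [hdim]
  let B := basisOfLinearIndependentOfCardEqFinrank h hcard
  have hB : ⇑B = ![x, y] := coe_basisOfLinearIndependentOfCardEqFinrank h hcard
  have hrep := B.sum_repr z
  rw [Fin.sum_univ_two] at hrep
  rw [hB] at hrep
  simp only [Matrix.cons_val_zero, Matrix.cons_val_one, Matrix.head_cons] at hrep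
  apply hz
  rw [← hrep]
  simp [map_add, map_smul, hωalt x, h0]

lemma aux_fderiv_le (x y : X) : fderiv ℝ (fun z : X => ‖z‖) x y ≤ ‖y‖ := by
  have h1 : ‖fderiv ℝ (fun z : X => ‖z‖) x‖ ≤ ((1 : NNReal) : ℝ) :=
    norm_fderiv_le_of_lipschitz (f := fun z : X => ‖z‖) (x₀ := x) ℝ lipschitzWith_one_norm
  calc fderiv ℝ (fun z : X => ‖z‖) x y ≤ ‖fderiv ℝ (fun z : X => ‖z‖) x y‖ := Real.le_norm_self _
    _ ≤ ‖fderiv ℝ (fun z : X => ‖z‖) x‖ * ‖y‖ := (fderiv ℝ (fun z : X => ‖z‖) x).le_opNorm y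
    _ ≤ 1 * ‖y‖ := by
        apply mul_le_mul_of_nonneg_right _ (norm_nonneg y)
        exact_mod_cast h1
    _ = ‖y‖ := one_mul _

lemma aux_birkhoff_fderiv_zero {x y : X}
    (hd : DifferentiableAt ℝ (fun z : X => ‖z‖) x)
    (hB : BirkhoffOrth x y) : fderiv ℝ (fun z : X => ‖z‖) x y = 0 := by
  have hline : HasDerivAt (fun s : ℝ => x + s • y) y 0 := by
    simpa using ((hasDerivAt_id (0 : ℝ)).smul_const y).const_add x
  have hfd : HasFDerivAt (fun z : X => ‖z‖) (fderiv ℝ (fun z : X => ‖z‖) x)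
      ((fun s : ℝ => x + s • y) 0) := by
    simpa using hd.hasFDerivAt
  have hcomp : HasDerivAt (fun s : ℝ => ‖x + s • y‖)
      (fderiv ℝ (fun z : X => ‖z‖) x y) 0 := hfd.comp_hasDerivAt 0 hline
  have hmin : IsLocalMin (fun s : ℝ => ‖x + s • y‖) 0 := by
    apply Filter.Eventually.of_forall
    intro s
    simpa using hB s
  exact hmin.hasDerivAt_eq_zero hcomp

end Aux

theorem zig_zag_characterization
    [NormedAddCommGroup X] [NormedSpace ℝ X] [FiniteDimensional ℝ X]
    [StrictConvexSpace ℝ X]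
    (hdim : Module.finrank ℝ X = 2)
    (hnorm : ContDiffOn ℝ (⊤ : ℕ∞) (fun x : X => ‖x‖) {x : X | x ≠ 0})
    (ω : X →ₗ[ℝ] X →ₗ[ℝ] ℝ) (hωalt : ∀ x : X, ω x x = 0)
    (hωnd : ∀ x : X, x ≠ 0 → ∃ y : X, ω x y ≠ 0)
    (b : X → X)
    (hb : ∀ v : X, v ≠ 0 → ‖b v‖ = 1 ∧ BirkhoffOrth v (b v) ∧ 0 < ω v (b v))
    (γ η : ℝ → X) (α κ : ℝ → ℝ)
    (hγ : ContDiff ℝ (⊤ : ℕ∞) γ) (hη : ContDiff ℝ (⊤ : ℕ∞) η)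
    (hαs : ContDiff ℝ (⊤ : ℕ∞) α) (hκs : ContDiff ℝ (⊤ : ℕ∞) κ)
    (hunit : ∀ t : ℝ, ‖η t‖ = 1)
    (hB : ∀ t : ℝ, BirkhoffOrth (η t) (deriv γ t))
    (hα : ∀ t : ℝ, deriv γ t = α t • b (η t))
    (hκ : ∀ t : ℝ, deriv η t = κ t • b (η t))
    (himm : ∀ t : ℝ, deriv γ t ≠ 0 ∨ deriv η t ≠ 0)
    (t₀ : ℝ) (hsing : deriv γ t₀ = 0)
    (hcusp : LinearIndependent ℝ ![iteratedDeriv 2 γ t₀, iteratedDeriv 3 γ t₀]) :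
    ω (η t₀) (deriv η t₀) ≠ 0 ∧
    (0 < ω (η t₀) (deriv η t₀) →
      ∃ ε > 0, ∀ t₁ t₂ : ℝ, t₀ - ε < t₁ → t₁ < t₀ → t₀ < t₂ → t₂ < t₀ + ε →
        ω (deriv γ t₁) (deriv γ t₂) < 0) ∧
    (ω (η t₀) (deriv η t₀) < 0 →
      ∃ ε > 0, ∀ t₁ t₂ : ℝ, t₀ - ε < t₁ → t₁ < t₀ → t₀ < t₂ → t₂ < t₀ + ε →
        0 < ω (deriv γ t₁) (deriv γ t₂)) := by
  classical
  have hone : (1 : WithTop ℕ∞) ≤ ((⊤ : ℕ∞) : WithTop ℕ∞) := by exact_mod_cast le_top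
  -- basic nonvanishing
  have hηne : ∀ t, η t ≠ 0 := by
    intro t h
    have := hunit t
    rw [h, norm_zero] at this
    norm_num at this
  have hbne : ∀ t, b (η t) ≠ 0 := by
    intro t h
    have := (hb (η t) (hηne t)).1
    rw [h, norm_zero] at this
    norm_num at this
  set u₀ : X := η t₀ with hu₀def
  set w₀ : X := b (η t₀) with hw₀def
  have hωp : 0 < ω u₀ w₀ := (hb (η t₀) (hηne t₀)).2.2
  have hηd0 : deriv η t₀ ≠ 0 := (himm t₀).resolve_left (not_not_intro hsing)
  have hκ0 : κ t₀ ≠ 0 := fun h => hηd0 (by rw [hκ t₀, h, zero_smul])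
  have hα0 : α t₀ = 0 := by
    rcases smul_eq_zero.mp (show α t₀ • b (η t₀) = 0 by rw [← hα t₀]; exact hsing) with h | h
    · exact h
    · exact absurd h (hbne t₀)
  have hωηη : ω (η t₀) (deriv η t₀) = κ t₀ * ω u₀ w₀ := by
    rw [hκ t₀, map_smul, smul_eq_mul]
  -- the open set where κ ≠ 0 and the smooth frame vector W
  set U : Set ℝ := {t | κ t ≠ 0} with hUdef
  have hUopen : IsOpen U := by
    have : U = κ ⁻¹' ({0}ᶜ) := rfl
    rw [this]
    exact (isOpen_compl_singleton).preimage hκs.continuous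
  have ht₀U : t₀ ∈ U := hκ0
  have hUmem : U ∈ 𝓝 t₀ := hUopen.mem_nhds ht₀U
  set W : ℝ → X := fun t => (κ t)⁻¹ • deriv η t with hWdef
  have hWb : ∀ t ∈ U, W t = b (η t) := by
    intro t ht
    rw [hWdef]
    simp only
    rw [hκ t, smul_smul, inv_mul_cancel₀ ht, one_smul]
  have hW0 : W t₀ = w₀ := hWb t₀ ht₀U
  have hderivη : ContDiff ℝ (⊤ : ℕ∞) (deriv η) :=
    (contDiff_infty_iff_deriv.mp (hη.of_le (by simp))).2
  have hWsm : ContDiffOn ℝ (⊤ : ℕ∞) W U := by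
    apply ContDiffOn.smul
    · exact ContDiffOn.inv (hκs.of_le (by simp)).contDiffOn (fun t ht => ht)
    · exact hderivη.contDiffOn
  have hWd : ∀ t ∈ U, HasDerivAt W (deriv W t) t := by
    intro t ht
    exact ((hWsm.contDiffAt (hUopen.mem_nhds ht)).differentiableAt (by simp)).hasDerivAt
  have hW'sm : ContDiffOn ℝ (1 : ℕ∞) (deriv W) U := by
    apply hWsm.deriv_of_isOpen hUopen
    exact_mod_cast (le_top : ((1 : ℕ∞) + 1 : ℕ∞) ≤ ⊤)
  have hW'd : HasDerivAt (deriv W) (deriv (deriv W) t₀) t₀ :=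
    ((hW'sm.contDiffAt hUmem).differentiableAt (by simp)).hasDerivAt
  set v : X := deriv W t₀ with hvdef
  set a1 : ℝ := deriv α t₀ with ha1def
  set a2 : ℝ := deriv (deriv α) t₀ with ha2def
  set c : ℝ := ω w₀ v with hcdef
  have hαd : ∀ t, HasDerivAt α (deriv α t) t := fun t =>
    ((hαs.differentiable (by simp)) t).hasDerivAt
  have hα'd : HasDerivAt (deriv α) a2 t₀ :=
    (((contDiff_infty_iff_deriv.mp (hαs.of_le (by simp))).2.differentiable (by simp)) t₀).hasDerivAt
  have hκd : ∀ t, HasDerivAt κ (deriv κ t) t := fun t =>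
    ((hκs.differentiable (by simp)) t).hasDerivAt
  -- derivative of γ on U
  have hγ'U : ∀ t ∈ U, deriv γ t = α t • W t := by
    intro t ht
    rw [hα t, hWb t ht]
  have hsm2 : ∀ t ∈ U, HasDerivAt (fun s => α s • W s)
      (α t • deriv W t + deriv α t • W t) t := by
    intro t ht
    exact (hαd t).smul (hWd t ht)
  have hγ'' : ∀ t ∈ U, deriv (deriv γ) t = α t • deriv W t + deriv α t • W t := by
    intro t ht
    have hev : deriv γ =ᶠ[𝓝 t] fun s => α s • W s :=
      Filter.eventuallyEq_of_mem (hUopen.mem_nhds ht) hγ'U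
    rw [hev.deriv_eq, (hsm2 t ht).deriv]
  have hit2 : iteratedDeriv 2 γ t₀ = a1 • w₀ := by
    rw [show (2 : ℕ) = 1 + 1 from rfl, iteratedDeriv_succ, iteratedDeriv_one]
    rw [hγ'' t₀ ht₀U, hα0, zero_smul, zero_add, hW0]
  have hit3 : iteratedDeriv 3 γ t₀ = a2 • w₀ + (2 * a1) • v := by
    rw [show (3 : ℕ) = 2 + 1 from rfl, iteratedDeriv_succ,
      show (2 : ℕ) = 1 + 1 from rfl, iteratedDeriv_succ, iteratedDeriv_one]
    have hev2 : deriv (deriv γ) =ᶠ[𝓝 t₀] fun t => α t • deriv W t + deriv α t • W t :=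
      Filter.eventuallyEq_of_mem hUmem hγ''
    have hd3 : HasDerivAt (fun t => α t • deriv W t + deriv α t • W t)
        ((α t₀ • deriv (deriv W) t₀ + deriv α t₀ • deriv W t₀)
          + (deriv α t₀ • deriv W t₀ + deriv (deriv α) t₀ • W t₀)) t₀ :=
      ((hαd t₀).smul hW'd).add (hα'd.smul (hWd t₀ ht₀U))
    rw [hev2.deriv_eq, hd3.deriv, hα0, zero_smul, zero_add, hW0]
    module
  -- nondegeneracy consequences
  have hDne : ω (iteratedDeriv 2 γ t₀) (iteratedDeriv 3 γ t₀) ≠ 0 :=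
    aux_ne hdim ω hωalt hωnd hcusp
  have hDval : ω (iteratedDeriv 2 γ t₀) (iteratedDeriv 3 γ t₀) = 2 * a1 ^ 2 * c := by
    rw [hit2, hit3]
    simp only [map_add, map_smul, LinearMap.add_apply, LinearMap.smul_apply, smul_eq_mul,
      hωalt w₀, hcdef]
    ring
  have ha1 : a1 ≠ 0 := by
    intro h
    apply hDne
    rw [hDval, h]
    ring
  have hcne : c ≠ 0 := by
    intro h
    apply hDne
    rw [hDval, h]
    ring
  -- norm differential facts
  have hnopen : IsOpen {x : X | x ≠ 0} := isOpen_compl_singleton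
  have hdiff : ∀ x : X, x ≠ 0 → DifferentiableAt ℝ (fun z : X => ‖z‖) x := by
    intro x hx
    exact (hnorm.contDiffAt (hnopen.mem_nhds hx)).differentiableAt (by simp)
  have hw₀ne : w₀ ≠ 0 := hbne t₀
  set f : X →L[ℝ] ℝ := fderiv ℝ (fun z : X => ‖z‖) u₀ with hfdef
  set g : X →L[ℝ] ℝ := fderiv ℝ (fun z : X => ‖z‖) w₀ with hgdef
  have hfu : f u₀ = 1 := by
    rw [hfdef]
    rw [(hdiff u₀ (hηne t₀)).fderiv_norm_self]
    exact hunit t₀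
  have hgw : g w₀ = 1 := by
    rw [hgdef]
    rw [(hdiff w₀ hw₀ne).fderiv_norm_self]
    exact (hb (η t₀) (hηne t₀)).1
  have hfw : f w₀ = 0 :=
    aux_birkhoff_fderiv_zero (hdiff u₀ (hηne t₀)) (hb (η t₀) (hηne t₀)).2.1
  have hfle : ∀ x : X, f x ≤ ‖x‖ := fun x => aux_fderiv_le u₀ x
  -- g v = 0 since ‖W t‖ = 1 on U
  have hWnorm : ∀ t ∈ U, ‖W t‖ = (1 : ℝ) := by
    intro t ht
    rw [hWb t ht]
    exact (hb (η t) (hηne t)).1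
  have hgv : g v = 0 := by
    have hfd2 : HasFDerivAt (fun z : X => ‖z‖) g (W t₀) := by
      rw [hW0, hgdef]
      exact (hdiff w₀ hw₀ne).hasFDerivAt
    have hchain : HasDerivAt (fun t => ‖W t‖) (g v) t₀ := hfd2.comp_hasDerivAt t₀ (hWd t₀ ht₀U)
    have hev : (fun t => ‖W t‖) =ᶠ[𝓝 t₀] fun _ => (1 : ℝ) :=
      Filter.eventuallyEq_of_mem hUmem hWnorm
    have h1 := hchain.deriv
    rw [hev.deriv_eq, deriv_const] at h1
    exact h1.symm
  -- second derivative test: κ t₀ * f v ≤ 0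
  have hη'U : ∀ t ∈ U, deriv η t = κ t • W t := by
    intro t ht
    rw [hκ t, hWb t ht]
  have hη''0 : HasDerivAt (deriv η) (κ t₀ • v + deriv κ t₀ • w₀) t₀ := by
    have hd : HasDerivAt (fun t => κ t • W t) (κ t₀ • v + deriv κ t₀ • w₀) t₀ := by
      have := (hκd t₀).smul (hWd t₀ ht₀U)
      rw [hW0] at this
      exact this
    exact hd.congr_of_eventuallyEq (Filter.eventuallyEq_of_mem hUmem hη'U)
  have hkey : κ t₀ * f v ≤ 0 := by
    by_contra hpos
    push_neg at hpos
    set h1 : ℝ → ℝ := fun t => f (deriv η t) with hh1def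
    have hh1d : HasDerivAt h1 (κ t₀ * f v) t₀ := by
      have hc := f.hasFDerivAt.comp_hasDerivAt t₀ hη''0
      have : f (κ t₀ • v + deriv κ t₀ • w₀) = κ t₀ * f v := by
        rw [map_add, map_smul, map_smul, hfw]
        simp
      rw [this] at hc
      exact hc
    have hh10 : h1 t₀ = 0 := by
      rw [hh1def]
      simp only
      rw [hκ t₀, map_smul, ← hw₀def, hfw]
      simp
    have hslope := hasDerivAt_iff_tendsto_slope.mp hh1d
    have hev : ∀ᶠ t in 𝓝[≠] t₀, 0 < slope h1 t₀ t :=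
      hslope.eventually (eventually_gt_nhds hpos)
    rw [eventually_nhdsWithin_iff] at hev
    obtain ⟨δ, hδ0, hδ⟩ := Metric.eventually_nhds_iff.mp hev
    set h : ℝ → ℝ := fun t => f (η t) with hhdef
    have hmax : ∀ t, h t ≤ h t₀ := by
      intro t
      rw [hhdef]
      simp only
      rw [← hu₀def, hfu]
      calc f (η t) ≤ ‖η t‖ := hfle (η t)
        _ = 1 := hunit t
    have hhd : ∀ t, HasDerivAt h (h1 t) t := fun t =>
      f.hasFDerivAt.comp_hasDerivAt t ((hη.differentiable (by simp) t).hasDerivAt)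
    have hmono : StrictMonoOn h (Icc t₀ (t₀ + δ / 2)) := by
      apply strictMonoOn_of_deriv_pos (convex_Icc _ _)
      · exact (f.continuous.comp (hη.continuous)).continuousOn
      · intro t ht
        rw [interior_Icc] at ht
        rw [(hhd t).deriv]
        have hdist : dist t t₀ < δ := by
          rw [Real.dist_eq, abs_lt]
          constructor <;> [linarith [ht.1, ht.2]; linarith [ht.1, ht.2]]
        have h01 : 0 < slope h1 t₀ t := hδ hdist (ne_of_gt ht.1)
        rw [slope_def_field, hh10, sub_zero] at h01
        have htpos : 0 < t - t₀ := sub_pos.mpr ht.1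
        have := mul_pos h01 htpos
        rwa [div_mul_cancel₀ _ (ne_of_gt htpos)] at this
    have hlt : h t₀ < h (t₀ + δ / 2) := by
      apply hmono (left_mem_Icc.mpr (by linarith)) (right_mem_Icc.mpr (by linarith))
      linarith
    exact absurd (hmax (t₀ + δ / 2)) (not_le.mpr hlt)
  -- decompose v in the basis (u₀, w₀)
  have hindep : LinearIndependent ℝ ![u₀, w₀] := by
    rw [LinearIndependent.pair_iff]
    intro s t hst
    have h1 : s * ω u₀ w₀ = 0 := by
      have h2 := congrArg (fun z => ω z w₀) hst
      simpa [map_add, map_smul, hωalt w₀] using h2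
    have hs : s = 0 := by
      rcases mul_eq_zero.mp h1 with h | h
      · exact h
      · exact absurd h (ne_of_gt hωp)
    refine ⟨hs, ?_⟩
    rw [hs, zero_smul, zero_add] at hst
    rcases smul_eq_zero.mp hst with h | h
    · exact h
    · exact absurd h hw₀ne
  have hcard : Fintype.card (Fin 2) = Module.finrank ℝ X := by simp [hdim]
  set B := basisOfLinearIndependentOfCardEqFinrank hindep hcard with hBdef
  have hBcoe : ⇑B = ![u₀, w₀] := coe_basisOfLinearIndependentOfCardEqFinrank hindep hcard
  obtain ⟨p, q, hvpq⟩ : ∃ p q : ℝ, v = p • u₀ + q • w₀ := by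
    refine ⟨B.repr v 0, B.repr v 1, ?_⟩
    have h := B.sum_repr v
    rw [Fin.sum_univ_two, hBcoe] at h
    simp only [Matrix.cons_val_zero, Matrix.cons_val_one, Matrix.head_cons] at h
    exact h.symm
  have hfv : f v = p := by
    rw [hvpq, map_add, map_smul, map_smul, hfu, hfw]
    simp
  have hgvpq : p * g u₀ + q = 0 := by
    have h := hgv
    rw [hvpq, map_add, map_smul, map_smul, hgw] at h
    simpa using h
  have hpne : p ≠ 0 := by
    intro hp
    apply hcne
    have hq : q = 0 := by
      rw [hp] at hgvpq
      linarith
    rw [hcdef, hvpq, hp, hq]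
    simp [hωalt]
  have hcval : c = -p * ω u₀ w₀ := by
    rw [hcdef, hvpq, map_add, map_smul, map_smul, hωalt w₀]
    rw [aux_skew ω hωalt w₀ u₀]
    simp only [smul_eq_mul]
    ring
  have hκp : κ t₀ * p < 0 := by
    rcases lt_or_eq_of_le (by rwa [hfv] at hkey) with h | h
    · exact h
    · exact absurd h (mul_ne_zero hκ0 hpne)
  have hκc : 0 < κ t₀ * c := by
    rw [hcval]
    nlinarith [hωp, hκp]
  clear_value u₀ w₀ v a1 a2 c f g
  -- continuity of (s, x) ↦ ω (W s) (deriv W x) at (t₀, t₀)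
  have hbig : Continuous (fun xy : X × X => ω xy.1 xy.2) := by
    have hℓ : Continuous fun x : X =>
        (LinearMap.toContinuousLinearMap (ω x) : X →L[ℝ] ℝ) := by
      exact ((LinearMap.toContinuousLinearMap.toLinearMap.comp
        ω)).continuous_of_finiteDimensional
    have := (hℓ.comp continuous_fst).clm_apply (continuous_snd : Continuous fun xy : X × X => xy.2)
    simpa using this
  have hWct : ContinuousAt W t₀ := hWsm.continuousOn.continuousAt hUmem
  have hW'ct : ContinuousAt (deriv W) t₀ := hW'sm.continuousOn.continuousAt hUmem
  have hconte : ContinuousAt (fun st : ℝ × ℝ => ω (W st.1) (deriv W st.2)) (t₀, t₀) := by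
    have hpair : ContinuousAt (fun st : ℝ × ℝ => ((W st.1, deriv W st.2) : X × X)) (t₀, t₀) :=
      ContinuousAt.prodMk (hWct.comp (f := Prod.fst) (x := (t₀, t₀)) continuousAt_fst) (hW'ct.comp (f := Prod.snd) (x := (t₀, t₀)) continuousAt_snd)
    exact (hbig.continuousAt).comp hpair
  have hval : ω (W t₀) (deriv W t₀) = c := by rw [hW0, hcdef, hvdef]
  have hev3 : ∀ᶠ st : ℝ × ℝ in 𝓝 (t₀, t₀), 0 < ω (W st.1) (deriv W st.2) * c := by
    have hmul : ContinuousAt (fun st : ℝ × ℝ => ω (W st.1) (deriv W st.2) * c) (t₀, t₀) :=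
      hconte.mul continuousAt_const
    have hcc : (0 : ℝ) < ω (W t₀) (deriv W t₀) * c := by
      rw [hval]; exact mul_self_pos.mpr hcne
    exact hmul.eventually (eventually_gt_nhds hcc)
  -- slope of α near t₀ has the sign of a1
  have hslopeα := hasDerivAt_iff_tendsto_slope.mp (hαd t₀)
  have hev4 : ∀ᶠ t in 𝓝[≠] t₀, 0 < slope α t₀ t * a1 := by
    have h : Filter.Tendsto (fun t => slope α t₀ t * a1) (𝓝[≠] t₀) (𝓝 (a1 * a1)) := by
      rw [ha1def]
      exact hslopeα.mul_const (deriv α t₀)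
    exact h.eventually (eventually_gt_nhds (mul_self_pos.mpr ha1))
  -- extract ε
  obtain ⟨δ₁, hδ₁, hball₁⟩ := Metric.mem_nhds_iff.mp hUmem
  obtain ⟨δ₂, hδ₂, hb₂⟩ := Metric.eventually_nhds_iff.mp hev3
  rw [eventually_nhdsWithin_iff] at hev4
  obtain ⟨δ₃, hδ₃, hb₃⟩ := Metric.eventually_nhds_iff.mp hev4
  set ε : ℝ := min δ₁ (min δ₂ δ₃) with hεdef
  have hε : 0 < ε := lt_min hδ₁ (lt_min hδ₂ hδ₃)
  have hεδ₁ : ε ≤ δ₁ := min_le_left _ _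
  have hεδ₂ : ε ≤ δ₂ := le_trans (min_le_right _ _) (min_le_left _ _)
  have hεδ₃ : ε ≤ δ₃ := le_trans (min_le_right _ _) (min_le_right _ _)
  -- the main sign estimate
  have main : ∀ t₁ t₂ : ℝ, t₀ - ε < t₁ → t₁ < t₀ → t₀ < t₂ → t₂ < t₀ + ε →
      ω (deriv γ t₁) (deriv γ t₂) * κ t₀ < 0 := by
    intro t₁ t₂ h1 h2 h3 h4
    have hballU : ∀ x : ℝ, t₀ - ε < x → x < t₀ + ε → x ∈ U := by
      intro x hx1 hx2
      apply hball₁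
      rw [Metric.mem_ball, Real.dist_eq, abs_lt]
      constructor <;> [linarith [hεδ₁]; linarith [hεδ₁]]
    have ht₁U : t₁ ∈ U := hballU t₁ h1 (by linarith)
    have ht₂U : t₂ ∈ U := hballU t₂ (by linarith) h4
    have h12 : t₁ < t₂ := lt_trans h2 h3
    have hsub : Icc t₁ t₂ ⊆ U := by
      intro x hx
      exact hballU x (by linarith [hx.1]) (by linarith [hx.2])
    set L : X →L[ℝ] ℝ := LinearMap.toContinuousLinearMap (ω (W t₁)) with hLdef
    have hLW : ∀ x : X, L x = ω (W t₁) x := fun x => rfl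
    clear_value L
    have hcont : ContinuousOn (fun x => L (W x)) (Icc t₁ t₂) :=
      L.continuous.comp_continuousOn (hWsm.continuousOn.mono hsub)
    have hderiv : ∀ x ∈ Ioo t₁ t₂, HasDerivAt (fun y => L (W y)) (L (deriv W x)) x := by
      intro x hx
      exact L.hasFDerivAt.comp_hasDerivAt x (hWd x (hsub (Ioo_subset_Icc_self hx)))
    obtain ⟨ξ, hξ, hξeq⟩ := exists_hasDerivAt_eq_slope (fun x => L (W x)) _ h12 hcont hderiv
    have hLt1 : L (W t₁) = 0 := by rw [hLW]; exact hωalt _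
    have hWW : ω (W t₁) (W t₂) = (t₂ - t₁) * ω (W t₁) (deriv W ξ) := by
      rw [← hLW, ← hLW]
      rw [hξeq, hLt1, sub_zero, mul_comm, div_mul_cancel₀ _ (sub_ne_zero.mpr (ne_of_gt h12))]
    have hE : 0 < ω (W t₁) (deriv W ξ) * c := by
      have hdist : dist ((t₁, ξ) : ℝ × ℝ) ((t₀, t₀) : ℝ × ℝ) < δ₂ := by
        rw [Prod.dist_eq, max_lt_iff]
        constructor
        · rw [Real.dist_eq, abs_lt]
          constructor <;> [linarith [hεδ₂]; linarith [hεδ₂]]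
        · rw [Real.dist_eq, abs_lt]
          constructor <;> [linarith [hξ.1, hξ.2, hεδ₂]; linarith [hξ.1, hξ.2, hεδ₂]]
      exact hb₂ hdist
    have hα₁ : 0 < slope α t₀ t₁ * a1 := by
      apply hb₃ _ (ne_of_lt h2)
      rw [Real.dist_eq, abs_lt]
      constructor <;> [linarith [hεδ₃]; linarith [hεδ₃]]
    have hα₂ : 0 < slope α t₀ t₂ * a1 := by
      apply hb₃ _ (ne_of_gt h3)
      rw [Real.dist_eq, abs_lt]
      constructor <;> [linarith [hεδ₃]; linarith [hεδ₃]]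
    have hαval : ∀ t : ℝ, t ≠ t₀ → α t = (t - t₀) * slope α t₀ t := by
      intro t ht
      rw [slope_def_field, hα0, sub_zero, mul_comm, div_mul_cancel₀ _ (sub_ne_zero.mpr ht)]
    have hωγ : ω (deriv γ t₁) (deriv γ t₂) = (α t₁ * α t₂) * ω (W t₁) (W t₂) := by
      rw [hγ'U t₁ ht₁U, hγ'U t₂ ht₂U]
      simp only [map_smul, LinearMap.smul_apply, smul_eq_mul]
      ring
    rw [hωγ, hWW, hαval t₁ (ne_of_lt h2), hαval t₂ (ne_of_gt h3)]
    have hs12 : 0 < slope α t₀ t₁ * slope α t₀ t₂ := by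
      nlinarith [mul_pos hα₁ hα₂, sq_nonneg a1]
    have hEκ : 0 < ω (W t₁) (deriv W ξ) * κ t₀ := by
      nlinarith [mul_pos hE hκc, sq_nonneg c]
    have hAB : (t₁ - t₀) * (t₂ - t₀) < 0 :=
      mul_neg_of_neg_of_pos (by linarith) (by linarith)
    have hrw : (t₁ - t₀) * slope α t₀ t₁ * ((t₂ - t₀) * slope α t₀ t₂) *
        ((t₂ - t₁) * ω (W t₁) (deriv W ξ)) * κ t₀
        = ((t₁ - t₀) * (t₂ - t₀)) * ((slope α t₀ t₁ * slope α t₀ t₂) *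
          ((t₂ - t₁) * (ω (W t₁) (deriv W ξ) * κ t₀))) := by ring
    rw [hrw]
    exact mul_neg_of_neg_of_pos hAB
      (mul_pos hs12 (mul_pos (by linarith) hEκ))
  -- conclude
  refine ⟨?_, ?_, ?_⟩
  · rw [hu₀def, hωηη]
    exact mul_ne_zero hκ0 (ne_of_gt hωp)
  · intro hsign
    have hκpos : 0 < κ t₀ := by
      rw [hu₀def, hωηη] at hsign
      by_contra hcon
      push_neg at hcon
      exact absurd hsign (not_lt.mpr (mul_nonpos_iff.mpr (Or.inr ⟨hcon, hωp.le⟩)))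
    refine ⟨ε, hε, fun t₁ t₂ h1 h2 h3 h4 => ?_⟩
    have hm := main t₁ t₂ h1 h2 h3 h4
    exact not_le.mp (fun hge => absurd hm (not_lt.mpr (mul_nonneg hge hκpos.le)))
  · intro hsign
    have hκneg : κ t₀ < 0 := by
      rw [hu₀def, hωηη] at hsign
      by_contra hcon
      push_neg at hcon
      exact absurd hsign (not_lt.mpr (mul_nonneg hcon hωp.le))
    refine ⟨ε, hε, fun t₁ t₂ h1 h2 h3 h4 => ?_⟩
    have hm := main t₁ t₂ h1 h2 h3 h4
    exact not_le.mp (fun hge => absurd hm (not_lt.mpr (mul_nonneg_iff.mpr (Or.inr ⟨hge, hκneg.le⟩))))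
end

section
/- Let (γ, η) : I → X × S be a Legendre immersion with curvature pair (α, κ). For any d ∈ ℝ, the parallel γ_d(t) := γ(t) + d·η(t) is a front: the pair (γ_d, η) is a Legendre immersion, with curvature pair (α + dκ, κ). -/
open scoped Topology
open Set

variable {X : Type*}

theorem parallel_of_front_is_front
    [NormedAddCommGroup X] [NormedSpace ℝ X] [FiniteDimensional ℝ X]
    [StrictConvexSpace ℝ X]
    (hdim : Module.finrank ℝ X = 2)
    (hnorm : ContDiffOn ℝ (⊤ : ℕ∞) (fun x : X => ‖x‖) {x : X | x ≠ 0})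
    (ω : X →ₗ[ℝ] X →ₗ[ℝ] ℝ) (hωalt : ∀ x : X, ω x x = 0)
    (hωnd : ∀ x : X, x ≠ 0 → ∃ y : X, ω x y ≠ 0)
    (b : X → X)
    (hb : ∀ v : X, v ≠ 0 → ‖b v‖ = 1 ∧ BirkhoffOrth v (b v) ∧ 0 < ω v (b v))
    (γ η : ℝ → X) (α κ : ℝ → ℝ)
    (hγ : ContDiff ℝ (⊤ : ℕ∞) γ) (hη : ContDiff ℝ (⊤ : ℕ∞) η)
    (hαs : ContDiff ℝ (⊤ : ℕ∞) α) (hκs : ContDiff ℝ (⊤ : ℕ∞) κ)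
    (hunit : ∀ t : ℝ, ‖η t‖ = 1)
    (hB : ∀ t : ℝ, BirkhoffOrth (η t) (deriv γ t))
    (hα : ∀ t : ℝ, deriv γ t = α t • b (η t))
    (hκ : ∀ t : ℝ, deriv η t = κ t • b (η t))
    (himm : ∀ t : ℝ, deriv γ t ≠ 0 ∨ deriv η t ≠ 0)
    (d : ℝ) :
    ∀ t : ℝ,
      BirkhoffOrth (η t) (deriv (fun s => γ s + d • η s) t) ∧
      deriv (fun s => γ s + d • η s) t = (α t + d * κ t) • b (η t) ∧
      (deriv (fun s => γ s + d • η s) t ≠ 0 ∨ deriv η t ≠ 0) := by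
  intro t
  have hηne : η t ≠ 0 := by
    intro h; have := hunit t; rw [h, norm_zero] at this; norm_num at this
  have hbne : b (η t) ≠ 0 := by
    have := (hb (η t) hηne).1
    intro h; rw [h, norm_zero] at this; norm_num at this
  have hd : deriv (fun s => γ s + d • η s) t
      = (α t + d * κ t) • b (η t) := by
    have h1 : DifferentiableAt ℝ γ t := (hγ.differentiable (by simp)) t
    have h2 : DifferentiableAt ℝ (fun s => d • η s) t :=
      ((hη.differentiable (by simp)) t).const_smul d
    rw [deriv_fun_add h1 h2, deriv_fun_const_smul d ((hη.differentiable (by simp)) t),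
      hα t, hκ t, smul_smul, add_smul]
  refine ⟨?_, hd, ?_⟩
  · rw [hd]
    intro s
    have := (hb (η t) hηne).2.1 (s * (α t + d * κ t))
    simpa [smul_smul, mul_comm] using this
  · by_cases hk : κ t = 0
    · left
      rw [hd]
      have hde : deriv η t = 0 := by rw [hκ t, hk, zero_smul]
      have hγne : deriv γ t ≠ 0 := (himm t).resolve_right (by simp [hde])
      have hαne : α t ≠ 0 := by
        intro h; apply hγne; rw [hα t, h, zero_smul]
      simp [hk, smul_eq_zero, hbne, hαne]
    · right
      rw [hκ t]
      simp [smul_eq_zero, hbne, hk]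
end

section
/- Let (γ, η) be a Legendre immersion with curvature pair (α, κ), κ nonvanishing, and define the evolute e_γ(t) = γ(t) − (α(t)/κ(t))η(t). Then a point lies on the evolute if and only if it is a singular point of some parallel γ_d = γ + dη: precisely, e_γ(t) is a singular point of the parallel with d = −α(t)/κ(t), and every singular point of every parallel γ_d arises this way. -/
open scoped Topology
open Set

variable {X : Type*}

theorem evolute_eq_singular_points_of_parallels
    [NormedAddCommGroup X] [NormedSpace ℝ X] [FiniteDimensional ℝ X]
    [StrictConvexSpace ℝ X]
    (hdim : Module.finrank ℝ X = 2)
    (hnorm : ContDiffOn ℝ (⊤ : ℕ∞) (fun x : X => ‖x‖) {x : X | x ≠ 0})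
    (ω : X →ₗ[ℝ] X →ₗ[ℝ] ℝ) (hωalt : ∀ x : X, ω x x = 0)
    (hωnd : ∀ x : X, x ≠ 0 → ∃ y : X, ω x y ≠ 0)
    (b : X → X)
    (hb : ∀ v : X, v ≠ 0 → ‖b v‖ = 1 ∧ BirkhoffOrth v (b v) ∧ 0 < ω v (b v))
    (γ η : ℝ → X) (α κ : ℝ → ℝ)
    (hγ : ContDiff ℝ (⊤ : ℕ∞) γ) (hη : ContDiff ℝ (⊤ : ℕ∞) η)
    (hαs : ContDiff ℝ (⊤ : ℕ∞) α) (hκs : ContDiff ℝ (⊤ : ℕ∞) κ)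
    (hunit : ∀ t : ℝ, ‖η t‖ = 1)
    (hB : ∀ t : ℝ, BirkhoffOrth (η t) (deriv γ t))
    (hα : ∀ t : ℝ, deriv γ t = α t • b (η t))
    (hκ : ∀ t : ℝ, deriv η t = κ t • b (η t))
    (himm : ∀ t : ℝ, deriv γ t ≠ 0 ∨ deriv η t ≠ 0)
    (hκ0 : ∀ t : ℝ, κ t ≠ 0) :
    {x : X | ∃ t : ℝ, x = γ t - (α t / κ t) • η t} =
      {x : X | ∃ d t : ℝ, deriv (fun s => γ s + d • η s) t = 0 ∧ x = γ t + d • η t} := by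
  ext x
  have hbne : ∀ t : ℝ, b (η t) ≠ 0 := by
    intro t
    have hη0 : η t ≠ 0 := by
      intro h; have := hunit t; rw [h, norm_zero] at this; norm_num at this
    have := (hb (η t) hη0).1
    intro h; rw [h, norm_zero] at this; norm_num at this
  have hd : ∀ d t : ℝ, deriv (fun s => γ s + d • η s) t
      = (α t + d * κ t) • b (η t) := by
    intro d t
    have h1 : DifferentiableAt ℝ γ t := hγ.differentiable (by simp) t
    have h2 : DifferentiableAt ℝ (fun s => d • η s) t :=
      ((hη.differentiable (by simp) t).const_smul d)
    rw [deriv_fun_add h1 h2, deriv_fun_const_smul d (hη.differentiable (by simp) t),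
      hα t, hκ t, smul_smul, add_smul]
  constructor
  · rintro ⟨t, rfl⟩
    refine ⟨-(α t / κ t), t, ?_, ?_⟩
    · rw [hd]
      have : α t + -(α t / κ t) * κ t = 0 := by
        have := hκ0 t
        field_simp
        ring
      rw [this, zero_smul]
    · rw [neg_smul, sub_eq_add_neg]
  · rintro ⟨d, t, h0, rfl⟩
    refine ⟨t, ?_⟩
    rw [hd] at h0
    have hc : α t + d * κ t = 0 := by
      by_contra h
      exact hbne t (by simpa [smul_eq_zero, h] using h0)
    have hdval : d = -(α t / κ t) := by
      have := hκ0 t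
      field_simp
      linarith
    rw [hdval, neg_smul, sub_eq_add_neg]
end

section
/- Let (γ, η) be a Legendre immersion with curvature pair (α, κ), κ nonvanishing, and define F : I × X → ℝ by F(t, v) = [γ(t) − v, η(t)]. Then F(t, v) = 0 and ∂F/∂t(t, v) = 0 hold simultaneously if and only if v = γ(t) − (α(t)/κ(t))η(t), i.e., v is the evolute point e_γ(t). In particular the envelope of the normal lines of γ is its evolute. -/
open scoped Topology
open Set

variable {X : Type*}

lemma omega_skew [NormedAddCommGroup X] [NormedSpace ℝ X]
    (ω : X →ₗ[ℝ] X →ₗ[ℝ] ℝ) (hωalt : ∀ x : X, ω x x = 0) (x y : X) :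
    ω x y = - ω y x := by
  have h := hωalt (x + y)
  simp [map_add, hωalt] at h
  linarith

theorem envelope_of_normal_lines_is_evolute
    [NormedAddCommGroup X] [NormedSpace ℝ X] [FiniteDimensional ℝ X]
    [StrictConvexSpace ℝ X]
    (hdim : Module.finrank ℝ X = 2)
    (hnorm : ContDiffOn ℝ (⊤ : ℕ∞) (fun x : X => ‖x‖) {x : X | x ≠ 0})
    (ω : X →ₗ[ℝ] X →ₗ[ℝ] ℝ) (hωalt : ∀ x : X, ω x x = 0)
    (hωnd : ∀ x : X, x ≠ 0 → ∃ y : X, ω x y ≠ 0)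
    (b : X → X)
    (hb : ∀ v : X, v ≠ 0 → ‖b v‖ = 1 ∧ BirkhoffOrth v (b v) ∧ 0 < ω v (b v))
    (γ η : ℝ → X) (α κ : ℝ → ℝ)
    (hγ : ContDiff ℝ (⊤ : ℕ∞) γ) (hη : ContDiff ℝ (⊤ : ℕ∞) η)
    (hαs : ContDiff ℝ (⊤ : ℕ∞) α) (hκs : ContDiff ℝ (⊤ : ℕ∞) κ)
    (hunit : ∀ t : ℝ, ‖η t‖ = 1)
    (hB : ∀ t : ℝ, BirkhoffOrth (η t) (deriv γ t))
    (hα : ∀ t : ℝ, deriv γ t = α t • b (η t))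
    (hκ : ∀ t : ℝ, deriv η t = κ t • b (η t))
    (himm : ∀ t : ℝ, deriv γ t ≠ 0 ∨ deriv η t ≠ 0)
    (hκ0 : ∀ t : ℝ, κ t ≠ 0) :
    ∀ (t : ℝ) (v : X),
      (ω (γ t - v) (η t) = 0 ∧ deriv (fun s => ω (γ s - v) (η s)) t = 0) ↔
        v = γ t - (α t / κ t) • η t := by
  -- continuous bilinear version of ω
  set B : X →L[ℝ] X →L[ℝ] ℝ :=
    LinearMap.toContinuousLinearMap
      ((LinearMap.toContinuousLinearMap (𝕜 := ℝ) (E := X) (F' := ℝ) :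
          (X →ₗ[ℝ] ℝ) →ₗ[ℝ] (X →L[ℝ] ℝ)).comp ω) with hBdef
  have hB' : ∀ x y : X, B x y = ω x y := fun x y => rfl
  intro t v
  have hη0 : η t ≠ 0 := by
    intro h
    have := hunit t
    rw [h, norm_zero] at this
    norm_num at this
  obtain ⟨-, -, hpos⟩ := hb (η t) hη0
  -- derivative computation
  have h1 : HasDerivAt (fun s => γ s - v) (deriv γ t) t :=
    ((hγ.differentiable (by simp) t).hasDerivAt).sub_const v
  have h2 : HasDerivAt η (deriv η t) t := (hη.differentiable (by simp) t).hasDerivAt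
  have hc : HasDerivAt (fun s => B (γ s - v)) (B (deriv γ t)) t :=
    B.hasFDerivAt.comp_hasDerivAt t h1
  have hF : HasDerivAt (fun s => ω (γ s - v) (η s))
      (ω (deriv γ t) (η t) + ω (γ t - v) (deriv η t)) t := by
    have := hc.clm_apply h2
    simpa [hB'] using this
  have hderiv : deriv (fun s => ω (γ s - v) (η s)) t
      = ω (deriv γ t) (η t) + ω (γ t - v) (deriv η t) := hF.deriv
  constructor
  · rintro ⟨h0, hd⟩
    -- γ t - v lies in span of η t
    have hspan : ∃ c : ℝ, γ t - v = c • η t := by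
      set f : X →ₗ[ℝ] ℝ := ω.flip (η t) with hf
      have hfη : f (η t) = 0 := hωalt (η t)
      obtain ⟨y, hy⟩ := hωnd (η t) hη0
      have hfy : f y ≠ 0 := by
        simp only [hf, LinearMap.flip_apply]
        rw [omega_skew ω hωalt]
        simpa using hy
      have hrange : LinearMap.range f = ⊤ := by
        rw [LinearMap.range_eq_top]
        intro r
        exact ⟨(r / f y) • y, by rw [map_smul, smul_eq_mul, div_mul_cancel₀ r hfy]⟩
      have hker : Module.finrank ℝ (LinearMap.ker f) = 1 := by
        have := LinearMap.finrank_range_add_finrank_ker f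
        rw [hrange, hdim] at this
        simp at this
        omega
      have hsub : (Submodule.span ℝ {η t} : Submodule ℝ X) ≤ LinearMap.ker f := by
        rw [Submodule.span_le]
        intro x hx
        simp at hx
        simp [hx, LinearMap.mem_ker, hfη]
      have hspaneq : Submodule.span ℝ {η t} = LinearMap.ker f := by
        apply Submodule.eq_of_le_of_finrank_le hsub
        rw [hker, finrank_span_singleton hη0]
      have hmem : γ t - v ∈ LinearMap.ker f := by
        show f (γ t - v) = 0
        simpa [hf, LinearMap.flip_apply] using h0
      rw [← hspaneq] at hmem
      obtain ⟨c, hc⟩ := Submodule.mem_span_singleton.mp hmem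
      exact ⟨c, hc.symm⟩
    obtain ⟨c, hcv⟩ := hspan
    rw [hderiv, hα, hκ, hcv] at hd
    simp only [map_smul, LinearMap.smul_apply, LinearMap.map_smul, smul_eq_mul] at hd
    rw [omega_skew ω hωalt (b (η t)) (η t)] at hd
    have hc' : c = α t / κ t := by
      have h1 : (c * κ t - α t) * ω (η t) (b (η t)) = 0 := by ring_nf; linarith
      have h2 : c * κ t - α t = 0 := by
        rcases mul_eq_zero.mp h1 with h | h
        · exact h
        · exact absurd h (ne_of_gt hpos)
      rw [eq_div_iff (hκ0 t)]
      linarith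
    rw [hc'] at hcv
    have : v = γ t - (α t / κ t) • η t := by
      rw [← hcv]; abel
    exact this
  · rintro rfl
    constructor
    · have : γ t - (γ t - (α t / κ t) • η t) = (α t / κ t) • η t := by abel
      rw [this]
      simp [map_smul, hωalt]
    · rw [hderiv, hα, hκ]
      have : γ t - (γ t - (α t / κ t) • η t) = (α t / κ t) • η t := by abel
      rw [this]
      simp only [map_smul, LinearMap.smul_apply, LinearMap.map_smul, smul_eq_mul]
      rw [omega_skew ω hωalt (b (η t)) (η t)]
      field_simp [hκ0 t]
      ring
end

section
/- Let (γ, η) : S¹ → X × S be a closed Legendre immersion with curvature pair (α, κ), κ nonvanishing. If γ has at least four singular points, then γ has at least four vertices, i.e., at least four points t where (d/dt)(α/κ)(t) = 0. -/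
open scoped Topology
open Set

variable {X : Type*}

/-- Sorting four distinct elements satisfying a predicate. -/
lemma exists_sorted_four {P : ℝ → Prop} {t₁ t₂ t₃ t₄ : ℝ}
    (h12 : t₁ ≠ t₂) (h13 : t₁ ≠ t₃) (h14 : t₁ ≠ t₄)
    (h23 : t₂ ≠ t₃) (h24 : t₂ ≠ t₄) (h34 : t₃ ≠ t₄)
    (p1 : P t₁) (p2 : P t₂) (p3 : P t₃) (p4 : P t₄) :
    ∃ a b c d : ℝ, a < b ∧ b < c ∧ c < d ∧ P a ∧ P b ∧ P c ∧ P d := by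
  classical
  set s : Finset ℝ := {t₁, t₂, t₃, t₄} with hs
  have hmem : ∀ x ∈ s, P x := by
    intro x hx
    simp only [hs, Finset.mem_insert, Finset.mem_singleton] at hx
    rcases hx with rfl | rfl | rfl | rfl <;> assumption
  set l : List ℝ := s.sort (· ≤ ·) with hl
  have hsort : l.Pairwise (· < ·) := (Finset.sortedLT_sort s).pairwise
  have hmem' : ∀ x ∈ l, P x := fun x hx => hmem x (Finset.mem_sort _ |>.1 hx)
  have hcard : s.card = 4 := by
    rw [hs]
    rw [Finset.card_insert_of_notMem (by simp [h12, h13, h14]),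
      Finset.card_insert_of_notMem (by simp [h23, h24]),
      Finset.card_insert_of_notMem (by simp [h34]), Finset.card_singleton]
  have hlen : l.length = 4 := by rw [hl, Finset.length_sort, hcard]
  match l, hlen, hsort, hmem' with
  | [a, b, c, d], _, hsort, hmem' =>
    simp only [List.pairwise_cons, List.mem_cons] at hsort
    exact ⟨a, b, c, d, hsort.1 b (by simp), hsort.2.1 c (by simp), hsort.2.2.1 d (by simp),
      hmem' a (by simp), hmem' b (by simp), hmem' c (by simp), hmem' d (by simp)⟩

theorem four_singular_points_imply_four_vertices
    [NormedAddCommGroup X] [NormedSpace ℝ X] [FiniteDimensional ℝ X]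
    [StrictConvexSpace ℝ X]
    (hdim : Module.finrank ℝ X = 2)
    (hnorm : ContDiffOn ℝ (⊤ : ℕ∞) (fun x : X => ‖x‖) {x : X | x ≠ 0})
    (ω : X →ₗ[ℝ] X →ₗ[ℝ] ℝ) (hωalt : ∀ x : X, ω x x = 0)
    (hωnd : ∀ x : X, x ≠ 0 → ∃ y : X, ω x y ≠ 0)
    (b : X → X)
    (hb : ∀ v : X, v ≠ 0 → ‖b v‖ = 1 ∧ BirkhoffOrth v (b v) ∧ 0 < ω v (b v))
    (γ η : ℝ → X) (α κ : ℝ → ℝ)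
    (hγ : ContDiff ℝ (⊤ : ℕ∞) γ) (hη : ContDiff ℝ (⊤ : ℕ∞) η)
    (hαs : ContDiff ℝ (⊤ : ℕ∞) α) (hκs : ContDiff ℝ (⊤ : ℕ∞) κ)
    (hunit : ∀ t : ℝ, ‖η t‖ = 1)
    (hB : ∀ t : ℝ, BirkhoffOrth (η t) (deriv γ t))
    (hα : ∀ t : ℝ, deriv γ t = α t • b (η t))
    (hκ : ∀ t : ℝ, deriv η t = κ t • b (η t))
    (himm : ∀ t : ℝ, deriv γ t ≠ 0 ∨ deriv η t ≠ 0)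
    (hγper : ∀ t : ℝ, γ (t + 1) = γ t) (hηper : ∀ t : ℝ, η (t + 1) = η t)
    (hαper : ∀ t : ℝ, α (t + 1) = α t) (hκper : ∀ t : ℝ, κ (t + 1) = κ t)
    (hκ0 : ∀ t : ℝ, κ t ≠ 0)
    (t₁ t₂ t₃ t₄ : ℝ)
    (h₁ : t₁ ∈ Set.Ico (0:ℝ) 1) (h₂ : t₂ ∈ Set.Ico (0:ℝ) 1)
    (h₃ : t₃ ∈ Set.Ico (0:ℝ) 1) (h₄ : t₄ ∈ Set.Ico (0:ℝ) 1)
    (hne : t₁ ≠ t₂ ∧ t₁ ≠ t₃ ∧ t₁ ≠ t₄ ∧ t₂ ≠ t₃ ∧ t₂ ≠ t₄ ∧ t₃ ≠ t₄)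
    (hsing : deriv γ t₁ = 0 ∧ deriv γ t₂ = 0 ∧ deriv γ t₃ = 0 ∧ deriv γ t₄ = 0) :
    ∃ s₁ s₂ s₃ s₄ : ℝ,
      s₁ ∈ Set.Ico (0:ℝ) 1 ∧ s₂ ∈ Set.Ico (0:ℝ) 1 ∧
      s₃ ∈ Set.Ico (0:ℝ) 1 ∧ s₄ ∈ Set.Ico (0:ℝ) 1 ∧
      (s₁ ≠ s₂ ∧ s₁ ≠ s₃ ∧ s₁ ≠ s₄ ∧ s₂ ≠ s₃ ∧ s₂ ≠ s₄ ∧ s₃ ≠ s₄) ∧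
      deriv (fun u => α u / κ u) s₁ = 0 ∧ deriv (fun u => α u / κ u) s₂ = 0 ∧
      deriv (fun u => α u / κ u) s₃ = 0 ∧ deriv (fun u => α u / κ u) s₄ = 0 := by
  obtain ⟨hne12, hne13, hne14, hne23, hne24, hne34⟩ := hne
  obtain ⟨hs1, hs2, hs3, hs4⟩ := hsing
  set f : ℝ → ℝ := fun u => α u / κ u with hf
  -- f is differentiable
  have hdiff : Differentiable ℝ f :=
    (hαs.differentiable (by simp)).div (hκs.differentiable (by simp)) hκ0
  have hcont : Continuous f := hdiff.continuous
  -- periodicity of f and deriv f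
  have hfper : ∀ t, f (t + 1) = f t := fun t => by simp only [hf, hαper, hκper]
  have hdfper : ∀ t, deriv f (t + 1) = deriv f t := by
    intro t
    have : (fun x => f (x + 1)) = f := funext hfper
    calc deriv f (t + 1) = deriv (fun x => f (x + 1)) t := (deriv_comp_add_const f 1 t).symm
      _ = deriv f t := by rw [this]
  -- α vanishes at singular points
  have hαzero : ∀ t, deriv γ t = 0 → α t = 0 := by
    intro t ht
    have hη0 : η t ≠ 0 := by
      intro h
      have := hunit t
      rw [h, norm_zero] at this
      norm_num at this
    have hbne : b (η t) ≠ 0 := by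
      intro h
      have := (hb (η t) hη0).1
      rw [h, norm_zero] at this
      norm_num at this
    have := hα t
    rw [ht] at this
    rcases smul_eq_zero.1 this.symm with h | h
    · exact h
    · exact absurd h hbne
  -- f vanishes at singular points
  have hP : ∀ t, t ∈ Set.Ico (0:ℝ) 1 → deriv γ t = 0 → f t = 0 := by
    intro t _ ht
    simp [hf, hαzero t ht]
  -- sort the four singular points
  obtain ⟨a, b', c, d, hab, hbc, hcd, ⟨ha01, hfa⟩, ⟨hb01, hfb⟩, ⟨hc01, hfc⟩, ⟨hd01, hfd⟩⟩ :=
    exists_sorted_four (P := fun t => t ∈ Set.Ico (0:ℝ) 1 ∧ f t = 0)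
      hne12 hne13 hne14 hne23 hne24 hne34
      ⟨h₁, hP t₁ h₁ hs1⟩ ⟨h₂, hP t₂ h₂ hs2⟩ ⟨h₃, hP t₃ h₃ hs3⟩ ⟨h₄, hP t₄ h₄ hs4⟩
  -- Rolle between consecutive zeros
  have rolle : ∀ u v : ℝ, u < v → f u = 0 → f v = 0 → ∃ s ∈ Set.Ioo u v, deriv f s = 0 := by
    intro u v huv hu hv
    exact exists_deriv_eq_zero huv (hcont.continuousOn) (by rw [hu, hv])
  obtain ⟨s₁, hs₁I, hds₁⟩ := rolle a b' hab hfa hfb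
  obtain ⟨s₂, hs₂I, hds₂⟩ := rolle b' c hbc hfb hfc
  obtain ⟨s₃, hs₃I, hds₃⟩ := rolle c d hcd hfc hfd
  have hfa1 : f (a + 1) = 0 := by rw [hfper]; exact hfa
  have hda1 : d < a + 1 := lt_of_lt_of_le hd01.2 (by linarith [ha01.1])
  obtain ⟨s₄', hs₄I, hds₄'⟩ := rolle d (a + 1) hda1 hfd hfa1
  -- basic position facts
  have ha0 : (0:ℝ) ≤ a := ha01.1
  have hd1 : d < 1 := hd01.2
  have hs₁m : s₁ ∈ Set.Ico (0:ℝ) 1 :=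
    ⟨le_of_lt (lt_of_le_of_lt ha0 hs₁I.1), lt_trans hs₁I.2 (lt_trans hbc (lt_trans hcd hd1))⟩
  have hs₂m : s₂ ∈ Set.Ico (0:ℝ) 1 :=
    ⟨le_of_lt (lt_of_le_of_lt ha0 (lt_trans hab hs₂I.1)), lt_trans hs₂I.2 (lt_trans hcd hd1)⟩
  have hs₃m : s₃ ∈ Set.Ico (0:ℝ) 1 :=
    ⟨le_of_lt (lt_of_le_of_lt ha0 (lt_trans hab (lt_trans hbc hs₃I.1))),
      lt_trans hs₃I.2 hd1⟩
  have h12' : s₁ < s₂ := lt_trans hs₁I.2 hs₂I.1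
  have h23' : s₂ < s₃ := lt_trans hs₂I.2 hs₃I.1
  by_cases hc1 : s₄' < 1
  · refine ⟨s₁, s₂, s₃, s₄', hs₁m, hs₂m, hs₃m,
      ⟨le_of_lt (lt_of_le_of_lt ha0 (by linarith [hs₄I.1, hab, hbc, hcd])), hc1⟩,
      ⟨ne_of_lt h12', ne_of_lt (lt_trans h12' h23'),
        ne_of_lt (by linarith [hs₃I.2, hs₄I.1]), ne_of_lt h23',
        ne_of_lt (by linarith [hs₃I.2, hs₄I.1]),
        ne_of_lt (by linarith [hs₃I.2, hs₄I.1])⟩, hds₁, hds₂, hds₃, hds₄'⟩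
  · push_neg at hc1
    refine ⟨s₁, s₂, s₃, s₄' - 1, hs₁m, hs₂m, hs₃m,
      ⟨by linarith, by linarith [hs₄I.2, ha01.2]⟩, ?_, hds₁, hds₂, hds₃, ?_⟩
    · have h41 : s₄' - 1 < s₁ := by linarith [hs₄I.2, hs₁I.1]
      exact ⟨ne_of_lt h12', ne_of_lt (lt_trans h12' h23'), (ne_of_lt h41).symm,
        ne_of_lt h23', (ne_of_lt (lt_trans h41 h12')).symm,
        (ne_of_lt (lt_trans h41 (lt_trans h12' h23'))).symm⟩
    · have := hdfper (s₄' - 1)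
      rw [sub_add_cancel] at this
      rw [show deriv (fun u => α u / κ u) (s₄' - 1) = deriv f (s₄' - 1) from rfl, ← this]
      exact hds₄'
end
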